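/- arXiv:1511.07340 — 7 statements merged into one kernel-verified Lean document; each statement's English description precedes it below -/
import Mathlib

section
/- Let D = {x_n}_{n=1}^N ⊂ ℝ^D be a finite dataset containing at least one nonzero point, let M ≥ 2 and P ≥ 1. If the diversity parameter satisfies λ > 1, then the infimum of E_λ(W, D) over all linear Modular Autoencoders W = {(A_i, B_i)}_{i=1}^M with A_i ∈ ℝ^{D×P}, B_i ∈ ℝ^{P×D} is −∞; that is, for every C > 0 there exists a parametrisation W with E_λ(W, D) < −C. -/
open Finset Matrix

/-- Squared Euclidean norm of a vector in `ℝ^n`. -/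
noncomputable def sqNorm {n : ℕ} (v : Fin n → ℝ) : ℝ := ∑ k, (v k) ^ 2

/-- The error `E_λ(W, 𝒟)` of a linear Modular Autoencoder
`W = {(Aᵢ, Bᵢ)}` on the dataset `𝒟 = {xₙ}`. -/
noncomputable def maeError {D P M N : ℕ} (lam : ℝ)
    (A : Fin M → Matrix (Fin D) (Fin P) ℝ) (B : Fin M → Matrix (Fin P) (Fin D) ℝ)
    (x : Fin N → Fin D → ℝ) : ℝ :=
  (1 / (N : ℝ)) * ∑ n,
    ((1 / (M : ℝ)) * ∑ i, sqNorm ((A i * B i) *ᵥ x n - x n)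
      - lam * ((1 / (M : ℝ)) * ∑ i,
          sqNorm ((A i * B i) *ᵥ x n - (1 / (M : ℝ)) • ∑ j, (A j * B j) *ᵥ x n)))

lemma sqNorm_smul_sub {D : ℕ} (u v : Fin D → ℝ) (a : ℝ) :
    sqNorm (a • u - v) = a ^ 2 * sqNorm u - 2 * a * (∑ k, u k * v k) + sqNorm v := by
  simp only [sqNorm, Pi.sub_apply, Pi.smul_apply, smul_eq_mul, Finset.mul_sum]
  rw [← Finset.sum_sub_distrib, ← Finset.sum_add_distrib]
  exact Finset.sum_congr rfl fun k _ => by ring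

lemma mulVec_aux {D P : ℕ} (hP : 0 < P) (u : Fin D → ℝ) (a : ℝ) (v : Fin D → ℝ) :
    ((Matrix.of fun (k : Fin D) (p : Fin P) => if p = ⟨0, hP⟩ then a * u k else 0) *
     (Matrix.of fun (p : Fin P) (d : Fin D) => if p = ⟨0, hP⟩ then u d else 0)) *ᵥ v
      = (a * ∑ k, u k * v k) • u := by
  funext k
  simp only [Matrix.mulVec, Matrix.mul_apply, Matrix.of_apply, dotProduct, ite_mul, mul_ite,
    zero_mul, mul_zero, Finset.sum_ite_eq', Finset.mem_univ, if_true,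
    Pi.smul_apply, smul_eq_mul, Finset.sum_mul, Finset.mul_sum]
  exact Finset.sum_congr rfl fun d _ => by ring

/-- if the dataset contains a nonzero point, `M ≥ 2`, `P ≥ 1` and
`λ > 1`, then the infimum of `E_λ(W, 𝒟)` over all parametrisations is `-∞`. -/
theorem maeError_unbounded_below {D P M N : ℕ} (hM : 2 ≤ M) (hP : 1 ≤ P) (hN : 1 ≤ N)
    (x : Fin N → Fin D → ℝ) (hx : ∃ n, x n ≠ 0)
    (lam : ℝ) (hlam : 1 < lam) (C : ℝ) (hC : 0 < C) :
    ∃ (A : Fin M → Matrix (Fin D) (Fin P) ℝ) (B : Fin M → Matrix (Fin P) (Fin D) ℝ),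
      maeError lam A B x < -C := by
  obtain ⟨n0, hx0⟩ := hx
  have hP0 : 0 < P := hP
  have hM0 : 0 < M := by omega
  have hMpos : (0 : ℝ) < (M : ℝ) := by exact_mod_cast hM0
  have hNpos : (0 : ℝ) < (N : ℝ) := by exact_mod_cast hN
  set u : Fin D → ℝ := x n0 with hu
  have hc : 0 < sqNorm u := by
    have hk : ∃ k, u k ≠ 0 := by
      by_contra h; push_neg at h; exact hx0 (funext h)
    obtain ⟨k, hk⟩ := hk
    have h1 : 0 < u k ^ 2 := by positivity
    exact lt_of_lt_of_le h1
      (Finset.single_le_sum (f := fun k => u k ^ 2) (fun i _ => sq_nonneg _) (Finset.mem_univ k))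
  set c : ℝ := sqNorm u with hcdef
  set dotu : (Fin D → ℝ) → ℝ := fun v => ∑ k, u k * v k with hdot
  have hdu : dotu u = c := by
    simp only [hdot, hcdef, sqNorm]
    exact Finset.sum_congr rfl fun k _ => (sq (u k)).symm ▸ by ring
  set R : ℝ := (1 / (N : ℝ)) * ∑ n, sqNorm (x n) with hR
  have hR0 : 0 ≤ R := by
    apply mul_nonneg (by positivity)
    exact Finset.sum_nonneg fun n _ => Finset.sum_nonneg fun k _ => sq_nonneg _
  set Q : ℝ := (1 / (N : ℝ)) * ∑ n, (dotu (x n)) ^ 2 with hQ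
  have hQ0 : 0 < Q := by
    apply mul_pos (by positivity)
    have h1 : 0 < dotu (x n0) ^ 2 := by rw [← hu, hdu]; positivity
    exact lt_of_lt_of_le h1
      (Finset.single_le_sum (f := fun n => dotu (x n) ^ 2) (fun i _ => sq_nonneg _)
        (Finset.mem_univ n0))
  set K : ℝ := (lam - 1) * (2 * c / M) * Q with hKdef
  have hK : 0 < K := by
    apply mul_pos (mul_pos (by linarith) _) hQ0
    positivity
  set t : ℝ := Real.sqrt ((R + C) / K + 1) with ht
  have ht2 : t ^ 2 = (R + C) / K + 1 := by
    rw [ht, Real.sq_sqrt]; positivity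
  -- index 0 and 1 in Fin M
  set i0 : Fin M := ⟨0, by omega⟩
  set i1 : Fin M := ⟨1, by omega⟩
  have hne : i0 ≠ i1 := by simp [i0, i1, Fin.ext_iff]
  set s : Fin M → ℝ := fun i => (if i = i0 then t else 0) + (if i = i1 then -t else 0) with hs
  have hsum_s : ∑ i, s i = 0 := by
    simp [hs, Finset.sum_add_distrib, Finset.sum_ite_eq']
  have hsum_s2 : ∑ i, (s i) ^ 2 = 2 * t ^ 2 := by
    have : ∀ i, (s i) ^ 2 = (if i = i0 then t ^ 2 else 0) + (if i = i1 then t ^ 2 else 0) := by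
      intro i
      rcases eq_or_ne i i0 with h | h <;> rcases eq_or_ne i i1 with h' | h'
      · exact absurd (h ▸ h') hne
      · simp [hs, h, h', hne]
      · subst h'
        rw [hs]
        simp only [if_neg (Ne.symm hne), if_neg h, if_pos rfl, if_true, zero_add]
        ring
      · simp [hs, h, h']
    rw [Finset.sum_congr rfl fun i _ => this i]
    simp [Finset.sum_add_distrib, Finset.sum_ite_eq']
    ring
  set A : Fin M → Matrix (Fin D) (Fin P) ℝ :=
    fun i => Matrix.of fun k p => if p = ⟨0, hP0⟩ then s i * u k else 0 with hA
  set B : Fin M → Matrix (Fin P) (Fin D) ℝ :=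
    fun _ => Matrix.of fun p d => if p = ⟨0, hP0⟩ then u d else 0 with hB
  refine ⟨A, B, ?_⟩
  have hmv : ∀ i (v : Fin D → ℝ), (A i * B i) *ᵥ v = (s i * dotu v) • u :=
    fun i v => mulVec_aux hP0 u (s i) v
  -- mean of outputs is zero
  have hmean : ∀ n, (1 / (M : ℝ)) • ∑ j, (A j * B j) *ᵥ x n = 0 := by
    intro n
    have : ∑ j, (A j * B j) *ᵥ x n = 0 := by
      simp only [hmv]
      rw [← Finset.sum_smul]
      have : ∑ j, s j * dotu (x n) = 0 := by
        rw [← Finset.sum_mul, hsum_s, zero_mul]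
      rw [this, zero_smul]
    rw [this, smul_zero]
  -- compute the error
  have key : maeError lam A B x = R + (1 - lam) * (2 * t ^ 2 * c / M) * Q := by
    unfold maeError
    have hterm : ∀ n,
        (1 / (M : ℝ)) * ∑ i, sqNorm ((A i * B i) *ᵥ x n - x n)
          - lam * ((1 / (M : ℝ)) * ∑ i,
              sqNorm ((A i * B i) *ᵥ x n - (1 / (M : ℝ)) • ∑ j, (A j * B j) *ᵥ x n))
        = sqNorm (x n) + (1 - lam) * (2 * t ^ 2 * c / M) * (dotu (x n)) ^ 2 := by
      intro n
      rw [hmean n]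
      have h1 : ∑ i, sqNorm ((A i * B i) *ᵥ x n - x n)
          = 2 * t ^ 2 * (dotu (x n)) ^ 2 * c + M * sqNorm (x n) := by
        have : ∀ i, sqNorm ((A i * B i) *ᵥ x n - x n)
            = (s i) ^ 2 * ((dotu (x n)) ^ 2 * c) - (s i) * (2 * dotu (x n) * dotu (x n))
              + sqNorm (x n) := by
          intro i
          rw [hmv, sqNorm_smul_sub]
          show (s i * dotu (x n)) ^ 2 * c - 2 * (s i * dotu (x n)) * dotu (x n) + _ = _
          ring
        rw [Finset.sum_congr rfl fun i _ => this i]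
        rw [Finset.sum_add_distrib, Finset.sum_sub_distrib, ← Finset.sum_mul, ← Finset.sum_mul,
          hsum_s, hsum_s2]
        simp [Finset.card_univ]
        ring
      have h2 : ∑ i, sqNorm ((A i * B i) *ᵥ x n - 0)
          = 2 * t ^ 2 * (dotu (x n)) ^ 2 * c := by
        have : ∀ i, sqNorm ((A i * B i) *ᵥ x n - 0)
            = (s i) ^ 2 * ((dotu (x n)) ^ 2 * c) := by
          intro i
          rw [hmv, sqNorm_smul_sub]
          have hz : ∑ k, u k * (0 : Fin D → ℝ) k = 0 := by simp
          have hz2 : sqNorm (0 : Fin D → ℝ) = 0 := by simp [sqNorm]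
          rw [hz, hz2]
          ring
        rw [Finset.sum_congr rfl fun i _ => this i, ← Finset.sum_mul, hsum_s2]
        ring
      rw [h1, h2]
      field_simp
      ring
    rw [Finset.sum_congr rfl fun n _ => hterm n, Finset.sum_add_distrib, mul_add, ← hR]
    rw [← Finset.mul_sum, hQ]
    ring
  rw [key]
  have h1 : (1 - lam) * (2 * t ^ 2 * c / M) * Q = -(K * t ^ 2) := by
    rw [hKdef]; ring
  rw [h1, ht2]
  have h2 : K * ((R + C) / K + 1) = R + C + K := by
    field_simp
  rw [h2]
  linarith
end

section
/- Let D = {x_n}_{n=1}^N ⊂ ℝ^D be a finite dataset containing at least one nonzero point, let M ≥ 2 and P ≥ 1, and let λ > 1. Then for every Q₁ > 0 and Q₂ > 0 there exists a linear Modular Autoencoder W = {(A_i, B_i)}_{i=1}^M with A_i ∈ ℝ^{D×P}, B_i ∈ ℝ^{P×D} such that simultaneously E_λ(W, D) < −Q₁ and the average reconstruction error (1/(N·M))·∑_{n=1}^N ∑_{i=1}^M ‖A_iB_i x_n − x_n‖² > Q₂. -/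
open Finset Matrix

lemma sqNorm_helper {D : ℕ} (d0 : Fin D) (a : ℝ) (v : Fin D → ℝ) :
    sqNorm ((fun k => if k = d0 then a else 0) - v) = a^2 - 2*a*(v d0) + sqNorm v := by
  unfold sqNorm
  have h : ∀ k : Fin D, ((fun k => if k = d0 then a else 0) - v) k ^ 2
      = (v k)^2 + (if k = d0 then a^2 - 2*a*v k else 0) := by
    intro k
    by_cases h : k = d0
    · simp [h]; ring
    · simp [h]
  rw [Finset.sum_congr rfl (fun k _ => h k), Finset.sum_add_distrib,
    Finset.sum_ite_eq' Finset.univ d0 (fun k => a^2 - 2*a*v k)]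
  simp; ring

lemma sqNorm_nonneg' {D : ℕ} (v : Fin D → ℝ) : 0 ≤ sqNorm v :=
  Finset.sum_nonneg fun k _ => sq_nonneg _

/-- if the dataset contains a nonzero point, `M ≥ 2`, `P ≥ 1` and
`λ > 1`, then there are parametrisations with arbitrarily low error `E_λ(W, 𝒟)`
and simultaneously arbitrarily high average reconstruction error. -/
theorem maeError_low_error_high_reconstruction {D P M N : ℕ}
    (hM : 2 ≤ M) (hP : 1 ≤ P) (hN : 1 ≤ N)
    (x : Fin N → Fin D → ℝ) (hx : ∃ n, x n ≠ 0)
    (lam : ℝ) (hlam : 1 < lam) (Q₁ Q₂ : ℝ) (hQ₁ : 0 < Q₁) (hQ₂ : 0 < Q₂) :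
    ∃ (A : Fin M → Matrix (Fin D) (Fin P) ℝ) (B : Fin M → Matrix (Fin P) (Fin D) ℝ),
      maeError lam A B x < -Q₁ ∧
      Q₂ < (1 / ((N : ℝ) * (M : ℝ))) * ∑ n, ∑ i, sqNorm ((A i * B i) *ᵥ x n - x n) := by
  classical
  obtain ⟨n0, hn0⟩ := hx
  obtain ⟨d0, hd0⟩ : ∃ d0, x n0 d0 ≠ 0 := by
    by_contra h; push_neg at h; exact hn0 (funext h)
  set c : Fin N → ℝ := fun n => x n d0 with hc
  set K : ℝ := ∑ n, (c n)^2 with hKdef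
  have hK : 0 < K := by
    apply Finset.sum_pos' (fun n _ => sq_nonneg _)
    exact ⟨n0, Finset.mem_univ _, by positivity⟩
  set SS : ℝ := ∑ n, sqNorm (x n) with hSSdef
  have hSS : 0 ≤ SS := Finset.sum_nonneg fun n _ => sqNorm_nonneg' _
  have hMpos : (0:ℝ) < M := by exact_mod_cast Nat.lt_of_lt_of_le Nat.zero_lt_two hM
  have hNpos : (0:ℝ) < N := by exact_mod_cast hN
  have hlam' : (0:ℝ) < lam - 1 := by linarith
  set T : ℝ := max ((M*N*Q₁ + M*SS) / (2*K*(lam - 1)) + 1) ((M*N*Q₂)/(2*K) + 1) with hTdef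
  have hT1 : (M*N*Q₁ + M*SS) / (2*K*(lam - 1)) + 1 ≤ T := le_max_left _ _
  have hT2 : (M*N*Q₂)/(2*K) + 1 ≤ T := le_max_right _ _
  have hTpos : 0 ≤ T := le_trans (by positivity) hT2
  set t : ℝ := Real.sqrt T with ht
  have ht2 : t^2 = T := Real.sq_sqrt hTpos
  set i0 : Fin M := ⟨0, by omega⟩ with hi0
  set i1 : Fin M := ⟨1, by omega⟩ with hi1
  have hne : i0 ≠ i1 := by simp [hi0, hi1, Fin.ext_iff]
  set s : Fin M → ℝ := fun i => (if i = i0 then t else 0) + (if i = i1 then -t else 0) with hs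
  have hsum : ∑ i, s i = 0 := by
    simp [hs, Finset.sum_add_distrib]
  have hsq : ∑ i, (s i)^2 = 2*t^2 := by
    have h : ∀ i : Fin M, (s i)^2 = (if i = i0 then t^2 else 0) + (if i = i1 then t^2 else 0) := by
      intro i
      rcases eq_or_ne i i0 with h0 | h0
      · subst h0; simp [hs, hne]
      · rcases eq_or_ne i i1 with h1 | h1
        · subst h1; simp [hs, Ne.symm hne]
        · simp [hs, h0, h1]
    rw [Finset.sum_congr rfl (fun i _ => h i), Finset.sum_add_distrib]
    simp; ring
  set p0 : Fin P := ⟨0, hP⟩ with hp0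
  set A : Fin M → Matrix (Fin D) (Fin P) ℝ :=
    fun i => Matrix.of fun d p => s i * (if d = d0 ∧ p = p0 then 1 else 0) with hA
  set B : Fin M → Matrix (Fin P) (Fin D) ℝ :=
    fun _ => Matrix.of fun p d => if p = p0 ∧ d = d0 then 1 else 0 with hB
  have hmul : ∀ i n, (A i * B i) *ᵥ x n = fun k => if k = d0 then s i * c n else 0 := by
    intro i n
    funext k
    simp only [Matrix.mulVec, Matrix.mul_apply, dotProduct, hA, hB, Matrix.of_apply]
    by_cases hk : k = d0 <;>
      simp [hk, ite_and, Finset.mul_sum, Finset.sum_mul, mul_assoc, hc]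
  have hrecon : ∀ n, ∑ i, sqNorm ((A i * B i) *ᵥ x n - x n)
      = 2*t^2*(c n)^2 + M * sqNorm (x n) := by
    intro n
    have h1 : ∀ i : Fin M, sqNorm ((A i * B i) *ᵥ x n - x n)
        = (s i)^2 * (c n)^2 - 2*(s i)*(c n)^2 + sqNorm (x n) := by
      intro i
      rw [hmul i n, sqNorm_helper d0 (s i * c n) (x n)]
      simp only [hc]
      ring
    rw [Finset.sum_congr rfl (fun i _ => h1 i)]
    rw [Finset.sum_add_distrib, Finset.sum_sub_distrib, ← Finset.sum_mul, ← Finset.sum_mul,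
      hsq, ← Finset.mul_sum, hsum, Finset.sum_const, Finset.card_univ, Fintype.card_fin,
      nsmul_eq_mul]
    ring
  refine ⟨A, B, ?_, ?_⟩
  · -- low error
    have hmean : ∀ n, (1 / (M : ℝ)) • ∑ j, (A j * B j) *ᵥ x n = 0 := by
      intro n
      have hz : ∑ j, (A j * B j) *ᵥ x n = 0 := by
        funext k
        rw [Finset.sum_apply]
        simp only [hmul]
        by_cases hk : k = d0 <;> simp [hk, ← Finset.sum_mul, hsum]
      rw [hz, smul_zero]
    have hvar : ∀ n, ∑ i, sqNorm ((A i * B i) *ᵥ x n - (1 / (M : ℝ)) • ∑ j, (A j * B j) *ᵥ x n)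
        = 2*t^2*(c n)^2 := by
      intro n
      have h1 : ∀ i : Fin M, sqNorm ((A i * B i) *ᵥ x n - (1 / (M : ℝ)) • ∑ j, (A j * B j) *ᵥ x n)
          = (s i)^2 * (c n)^2 := by
        intro i
        rw [hmean n, hmul i n]
        have hh := sqNorm_helper d0 (s i * c n) (0 : Fin D → ℝ)
        simp only [Pi.zero_apply, mul_zero, sub_zero] at hh ⊢
        rw [hh]
        have h0 : sqNorm (0 : Fin D → ℝ) = 0 := by simp [sqNorm]
        rw [h0]; ring
      rw [Finset.sum_congr rfl (fun i _ => h1 i), ← Finset.sum_mul, hsq]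
    have hE : maeError lam A B x = (1/N) * (SS + (1-lam) * (2*t^2/M) * K) := by
      unfold maeError
      have hterm : ∀ n : Fin N,
          (1 / (M : ℝ)) * ∑ i, sqNorm ((A i * B i) *ᵥ x n - x n)
            - lam * ((1 / (M : ℝ)) * ∑ i,
                sqNorm ((A i * B i) *ᵥ x n - (1 / (M : ℝ)) • ∑ j, (A j * B j) *ᵥ x n))
          = sqNorm (x n) + (1-lam) * (2*t^2/M) * (c n)^2 := by
        intro n
        rw [hrecon n, hvar n]
        field_simp
        ring
      rw [Finset.sum_congr rfl (fun n _ => hterm n), Finset.sum_add_distrib, ← hSSdef,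
        ← Finset.mul_sum, ← hKdef]
    rw [hE, ht2]
    have hd : (0:ℝ) < 2*K*(lam-1) := by positivity
    have h1' : M*N*Q₁ + M*SS ≤ (T - 1) * (2*K*(lam-1)) := by
      rw [← div_le_iff₀ hd]; linarith
    rw [show (1:ℝ)/N * (SS + (1-lam)*(2*T/M)*K) = (SS*M + (1-lam)*2*T*K) / (N*M) by
      rw [one_div_mul_eq_div, div_eq_div_iff (by positivity) (by positivity)]
      field_simp]
    rw [div_lt_iff₀ (by positivity)]
    nlinarith [h1', hd]
  · -- high reconstruction
    rw [Finset.sum_congr rfl (fun n _ => hrecon n), Finset.sum_add_distrib]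
    have e2 : ∑ n, 2*t^2*(c n)^2 = 2*T*K := by
      rw [← Finset.mul_sum, ht2, ← hKdef]
    have e3 : ∑ n, (M:ℝ)*sqNorm (x n) = M*SS := by
      rw [← Finset.mul_sum, ← hSSdef]
    rw [e2, e3]
    have h2' : M*N*Q₂ ≤ (T-1) * (2*K) := by
      rw [← div_le_iff₀ (by positivity)]; linarith
    rw [show (1:ℝ)/(N*M) * (2*T*K + M*SS) = (2*T*K + M*SS)/(N*M) by ring]
    rw [lt_div_iff₀ (by positivity)]
    nlinarith [h2', hK, hSS]
end

section
/- Let φ : ℝ^D × P → ℝ^K be a parametrised feature map (P an arbitrary parameter set) such that for every x ∈ ℝ^D there exists ρ ∈ P with φ(x, ρ) ≠ 0. Let D = {(x_n, y_n)}_{n=1}^N be a nonempty finite dataset in ℝ^D × ℝ^Q, let M ≥ 2, and let λ > 1. Then the infimum of E_λ(F, D) over all modular linear-top-layer networks F_i(x) = W^i · φ(x, ρ^i) (with weight matrices W^i ∈ ℝ^{Q×K} and parameters ρ^i ∈ P, i = 1,…,M) is −∞: for every C > 0 there exist choices of W^1,…,W^M and ρ^1,…,ρ^M with E_λ(F, D)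 < −C. -/
open Finset Matrix

/-- The ensemble error `E_λ(F, 𝒟)` of a Modular Regression Network
`F = {Fᵢ}` on the dataset `𝒟 = {(xₙ, yₙ)}`. -/
noncomputable def ensError {D Q M N : ℕ} (lam : ℝ)
    (F : Fin M → (Fin D → ℝ) → (Fin Q → ℝ))
    (x : Fin N → Fin D → ℝ) (y : Fin N → Fin Q → ℝ) : ℝ :=
  (1 / (N : ℝ)) * ∑ n,
    ((1 / (M : ℝ)) * ∑ i, sqNorm (F i (x n) - y n)
      - lam * ((1 / (M : ℝ)) * ∑ i,
          sqNorm (F i (x n) - (1 / (M : ℝ)) • ∑ j, F j (x n))))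

/-- for a Modular Linear Top Layer network with `M ≥ 2`, `Q ≥ 1`,
a nonempty dataset and `λ > 1`, the infimum of `E_λ(F, 𝒟)` over all
parametrisations is `-∞`. -/
theorem mlt_ensError_unbounded_below {D K Q M N : ℕ} {P : Type*}
    (hM : 2 ≤ M) (hQ : 1 ≤ Q) (hN : 1 ≤ N)
    (φ : (Fin D → ℝ) → P → (Fin K → ℝ)) (hφ : ∀ x, ∃ ρ, φ x ρ ≠ 0)
    (x : Fin N → Fin D → ℝ) (y : Fin N → Fin Q → ℝ)
    (lam : ℝ) (hlam : 1 < lam) (C : ℝ) (hC : 0 < C) :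
    ∃ (W : Fin M → Matrix (Fin Q) (Fin K) ℝ) (ρ : Fin M → P),
      ensError lam (fun i x => (W i) *ᵥ φ x (ρ i)) x y < -C := by
  have hM0 : (0:ℝ) < M := Nat.cast_pos.mpr (by omega)
  -- data point 0 and a parameter with nonzero features there
  set n0 : Fin N := ⟨0, by omega⟩ with hn0
  obtain ⟨ρ0, hρ0⟩ := hφ (x n0)
  obtain ⟨k0, hk0⟩ : ∃ k, φ (x n0) ρ0 k ≠ 0 := by
    by_contra h; push_neg at h; exact hρ0 (funext h)
  set q0 : Fin Q := ⟨0, by omega⟩ with hq0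
  set c : Fin N → ℝ := fun n => φ (x n) ρ0 k0 with hc
  set S : ℝ := ∑ n, (c n)^2 with hS
  have hSpos : 0 < S := by
    have h1 : 0 < (c n0)^2 := by positivity
    have h2 : (c n0)^2 ≤ S := by
      apply Finset.single_le_sum (f := fun n => (c n)^2) (fun n _ => by positivity)
      exact Finset.mem_univ n0
    linarith
  set B : ℝ := (1 / (N:ℝ)) * ∑ n, sqNorm (y n) with hB
  have hBnn : 0 ≤ B := by
    apply mul_nonneg (by positivity)
    exact Finset.sum_nonneg fun n _ => Finset.sum_nonneg fun q _ => by positivity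
  have hlam1 : 0 < lam - 1 := by linarith
  set u : ℝ := (C + B + 1) * N * M / (2 * (lam - 1) * S) with hu
  have hupos : 0 < u := by
    apply div_pos
    · have : 0 < C + B + 1 := by linarith
      have hN0 : (0:ℝ) < N := by exact_mod_cast Nat.lt_of_lt_of_le Nat.zero_lt_one hN
      positivity
    · positivity
  set t : ℝ := Real.sqrt u with ht
  have ht2 : t ^ 2 = u := Real.sq_sqrt hupos.le
  -- sign pattern
  set i0 : Fin M := ⟨0, by omega⟩ with hi0
  set i1 : Fin M := ⟨1, by omega⟩ with hi1
  have hi01 : i0 ≠ i1 := by simp [hi0, hi1, Fin.ext_iff]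
  set a : Fin M → ℝ := fun i => (if i = i0 then (1:ℝ) else 0) + (if i = i1 then (-1:ℝ) else 0)
    with ha
  have hsuma : ∑ i, a i = 0 := by
    simp [ha, Finset.sum_add_distrib]
  have hsuma2 : ∑ i, (a i)^2 = 2 := by
    have : ∀ i, (a i)^2 = (if i = i0 then (1:ℝ) else 0) + (if i = i1 then (1:ℝ) else 0) := by
      intro i
      by_cases h0 : i = i0 <;> by_cases h1 : i = i1 <;>
        simp [ha, h0, h1, hi01] <;> ring_nf <;> simp_all
    rw [Finset.sum_congr rfl (fun i _ => this i)]
    simp [Finset.sum_add_distrib]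
    norm_num
  -- weights
  set W : Fin M → Matrix (Fin Q) (Fin K) ℝ :=
    fun i q k => if q = q0 ∧ k = k0 then t * a i else 0 with hW
  refine ⟨W, fun _ => ρ0, ?_⟩
  set e : Fin Q → ℝ := fun q => if q = q0 then (1:ℝ) else 0 with he
  have hFe : ∀ i n, (W i) *ᵥ φ (x n) ρ0 = fun q => (t * a i * c n) * e q := by
    intro i n
    funext q
    simp only [Matrix.mulVec, dotProduct, hW, he]
    by_cases hq : q = q0
    · simp only [hq, if_pos rfl, true_and, mul_one]
      rw [Finset.sum_congr rfl (fun k _ => show (if k = k0 then t * a i else 0) * φ (x n) ρ0 k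
            = if k = k0 then t * a i * φ (x n) ρ0 k else 0 by split <;> simp)]
      rw [Finset.sum_ite_eq' Finset.univ k0 (fun k => t * a i * φ (x n) ρ0 k)]
      simp [hc]
    · simp [hq]
  -- key: sum of modules is 0
  have hFsum : ∀ n, ∑ j, (W j) *ᵥ φ (x n) ρ0 = 0 := by
    intro n
    funext q
    simp only [Finset.sum_apply, hFe, Pi.zero_apply]
    have : ∑ j, t * a j * c n * e q = (∑ j, a j) * (t * c n * e q) := by
      rw [Finset.sum_mul]; exact Finset.sum_congr rfl fun j _ => by ring
    rw [this, hsuma, zero_mul]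
  have hsq0 : sqNorm (0 : Fin Q → ℝ) = 0 := by simp [sqNorm]
  have hA : ∀ (s : ℝ) (v : Fin Q → ℝ),
      sqNorm ((fun q => s * e q) - v) = s^2 - 2*s*v q0 + sqNorm v := by
    intro s v
    unfold sqNorm
    rw [Finset.sum_congr rfl (fun q _ => show ((fun q => s * e q) - v) q ^ 2
        = (v q)^2 + (if q = q0 then s^2 - 2*s*v q0 else 0) by
          by_cases hq : q = q0 <;> simp [he, hq, Pi.sub_apply] <;> ring)]
    rw [Finset.sum_add_distrib, Finset.sum_ite_eq' Finset.univ q0]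
    simp [sqNorm]; ring
  have hMne : (M:ℝ) ≠ 0 := ne_of_gt hM0
  have hN0 : (0:ℝ) < N := Nat.cast_pos.mpr (by omega)
  have hNne : (N:ℝ) ≠ 0 := ne_of_gt hN0
  have e1 : ∀ n : Fin N, ∑ i, (t * a i * c n)^2 = 2 * u * (c n)^2 := by
    intro n
    calc ∑ i, (t * a i * c n)^2 = ∑ i, (t^2 * (c n)^2) * (a i)^2 :=
          Finset.sum_congr rfl fun i _ => by ring
      _ = t^2 * (c n)^2 * ∑ i, (a i)^2 := (Finset.mul_sum _ _ _).symm
      _ = 2 * u * (c n)^2 := by rw [hsuma2, ht2]; ring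
  have hpt : ∀ n : Fin N,
      (1 / (M:ℝ)) * ∑ i, sqNorm ((W i *ᵥ φ (x n) ρ0) - y n)
        - lam * ((1 / (M:ℝ)) * ∑ i, sqNorm ((W i *ᵥ φ (x n) ρ0)
            - (1 / (M:ℝ)) • ∑ j, (W j *ᵥ φ (x n) ρ0)))
      = (2 * u * (1 - lam) / (M:ℝ)) * (c n)^2 + sqNorm (y n) := by
    intro n
    have h1 : ∑ i, sqNorm ((W i *ᵥ φ (x n) ρ0) - y n)
        = 2 * u * (c n)^2 + M * sqNorm (y n) := by
      rw [Finset.sum_congr rfl (fun i _ => by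
        rw [hFe i n, hA (t * a i * c n) (y n)])]
      rw [Finset.sum_add_distrib, Finset.sum_sub_distrib, e1 n]
      have e2 : ∑ i, 2*(t * a i * c n)*(y n q0) = 0 := by
        have : ∑ i, 2*(t * a i * c n)*(y n q0)
            = (∑ i, a i) * (2 * t * c n * y n q0) := by
          rw [Finset.sum_mul]; exact Finset.sum_congr rfl fun i _ => by ring
        rw [this, hsuma, zero_mul]
      rw [e2, Finset.sum_const, Finset.card_univ, Fintype.card_fin, nsmul_eq_mul]
      ring
    have h2 : ∑ i, sqNorm ((W i *ᵥ φ (x n) ρ0)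
          - (1 / (M:ℝ)) • ∑ j, (W j *ᵥ φ (x n) ρ0)) = 2 * u * (c n)^2 := by
      rw [hFsum n, smul_zero]
      rw [Finset.sum_congr rfl (fun i _ => by
        rw [hFe i n, hA (t * a i * c n) 0])]
      simp only [Pi.zero_apply, mul_zero, sub_zero, hsq0, add_zero]
      exact e1 n
    rw [h1, h2]
    field_simp
    ring
  have key : ensError lam (fun i x' => W i *ᵥ φ x' ρ0) x y
      = (2 * u * (1 - lam) / ((N:ℝ) * M)) * S + B := by
    simp only [ensError]
    rw [Finset.sum_congr rfl fun n _ => hpt n]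
    rw [Finset.sum_add_distrib, ← Finset.mul_sum, ← hS, hB]
    field_simp
  have hSne : S ≠ 0 := ne_of_gt hSpos
  have hlamne : lam - 1 ≠ 0 := ne_of_gt hlam1
  have hval : (2 * u * (1 - lam) / ((N:ℝ) * M)) * S = -(C + B + 1) := by
    rw [hu]; field_simp; ring
  show ensError lam (fun i x' => W i *ᵥ φ x' ρ0) x y < -C
  rw [key, hval]; linarith
end

section
/- Let M ≥ 2, let D = {(x_n, y_n)}_{n=1}^N be a finite dataset in ℝ^D × ℝ^Q, let i ∈ {1,…,M}, and fix functions F_j : ℝ^D → ℝ^Q for all j ≠ i. If 0 ≤ λ < M/(M−1), then the infimum of E_λ(F, D) over all choices of the function F_i : ℝ^D → ℝ^Q (with F_j fixed for j ≠ i) is finite, i.e. there exists a real lower bound B such that E_λ(F, D) ≥ B for every choice of F_i. -/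
open Finset

lemma quad_lb (a b u w : ℝ) (h : 0 < a + b) (t : ℝ) :
    a*b*(u-w)^2/(a+b) ≤ a*(t-u)^2 + b*(t-w)^2 := by
  rw [div_le_iff₀ h]
  nlinarith [sq_nonneg ((a+b)*t - (a*u+b*w))]

noncomputable def scalarLoss (M : ℕ) (lam : ℝ) (a : Fin M → ℝ) (yv : ℝ) : ℝ :=
  (1/(M:ℝ)) * ∑ j, (a j - yv)^2
    - lam * ((1/(M:ℝ)) * ∑ j, (a j - (1/(M:ℝ)) * ∑ l, a l)^2)

lemma variance_identity {M : ℕ} (a : Fin M → ℝ) (y m : ℝ)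
    (hm : ∑ j, a j = (M:ℝ) * m) :
    ∑ j, (a j - m)^2 = ∑ j, (a j - y)^2 - (M:ℝ)*(m-y)^2 := by
  have h1 : ∀ j : Fin M, (a j - m)^2
      = (a j - y)^2 + (m^2 - y^2) - (a j)*(2*(m-y)) := fun j => by ring
  rw [Finset.sum_congr rfl (fun j _ => h1 j), Finset.sum_sub_distrib,
    Finset.sum_add_distrib, Finset.sum_const, ← Finset.sum_mul, hm,
    Finset.card_univ, Fintype.card_fin, nsmul_eq_mul]
  ring

lemma scalar_bdd {M : ℕ} (hM : 2 ≤ M) (i : Fin M) (g : Fin M → ℝ) (yv lam : ℝ)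
    (hlam0 : 0 ≤ lam) (hlam : lam < (M:ℝ)/((M:ℝ)-1)) :
    ∃ B, ∀ t, B ≤ scalarLoss M lam (Function.update g i t) yv := by
  have hM2 : (2:ℝ) ≤ (M:ℝ) := by exact_mod_cast hM
  have hMpos : (0:ℝ) < (M:ℝ) := by linarith
  have hM1 : (0:ℝ) < (M:ℝ) - 1 := by linarith
  set s := ∑ j ∈ univ.erase i, g j with hs
  set S := ∑ j ∈ univ.erase i, (g j - yv)^2 with hS
  set a := (1 - lam)/(M:ℝ) with ha
  set b := lam/(M:ℝ)^2 with hb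
  have hab : 0 < a + b := by
    have h1 : lam * ((M:ℝ)-1) < (M:ℝ) := (lt_div_iff₀ hM1).mp hlam
    rw [ha, hb]
    rw [div_add_div _ _ (ne_of_gt hMpos) (by positivity)]
    apply div_pos
    · nlinarith
    · positivity
  refine ⟨a*S + a*b*(yv-((M:ℝ)*yv - s))^2/(a+b), fun t => ?_⟩
  have hsum : ∀ f : ℝ → ℝ, ∑ j, f (Function.update g i t j)
      = f t + ∑ j ∈ univ.erase i, f (g j) := by
    intro f
    rw [← Finset.add_sum_erase _ _ (mem_univ i)]
    congr 1
    · simp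
    · exact Finset.sum_congr rfl (fun j hj => by
        rw [Function.update_of_ne (Finset.ne_of_mem_erase hj)])
  have hsum1 : ∑ j, Function.update g i t j = t + s := hsum id
  set m := (t + s)/(M:ℝ) with hm
  have hmean : (1/(M:ℝ)) * ∑ l, Function.update g i t l = m := by
    rw [hsum1, hm]; ring
  have hvar : ∑ j, (Function.update g i t j - m)^2
      = ∑ j, (Function.update g i t j - yv)^2 - (M:ℝ)*(m-yv)^2 := by
    apply variance_identity
    rw [hsum1, hm]; field_simp
  have hsum2 : ∑ j, (Function.update g i t j - yv)^2 = (t - yv)^2 + S := by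
    exact hsum (fun z => (z - yv)^2)
  have key : scalarLoss M lam (Function.update g i t) yv
      = a*(t-yv)^2 + a*S + b*(t-((M:ℝ)*yv - s))^2 := by
    rw [scalarLoss]
    simp only [hmean]
    rw [hvar, hsum2, ha, hb, hm]
    field_simp
    ring
  rw [key]
  have := quad_lb a b yv ((M:ℝ)*yv - s) hab t
  linarith

/-- with all modules `Fⱼ`, `j ≠ i`, held fixed and
`0 ≤ λ < M/(M-1)`, the ensemble error is bounded below over all choices of
the `i`-th module. -/
theorem ensError_bddBelow_in_single_module {D Q M N : ℕ} (hM : 2 ≤ M) (i : Fin M)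
    (G : Fin M → (Fin D → ℝ) → (Fin Q → ℝ))
    (x : Fin N → Fin D → ℝ) (y : Fin N → Fin Q → ℝ)
    (lam : ℝ) (hlam0 : 0 ≤ lam) (hlam : lam < (M : ℝ) / ((M : ℝ) - 1)) :
    ∃ B : ℝ, ∀ Fi : (Fin D → ℝ) → (Fin Q → ℝ),
      B ≤ ensError lam (Function.update G i Fi) x y := by
  choose B hB using fun (n : Fin N) (k : Fin Q) =>
    scalar_bdd hM i (fun j => G j (x n) k) (y n k) lam hlam0 hlam
  refine ⟨(1/(N:ℝ)) * ∑ n, ∑ k, B n k, fun Fi => ?_⟩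
  have hrw : ensError lam (Function.update G i Fi) x y
      = (1/(N:ℝ)) * ∑ n, ∑ k, scalarLoss M lam
          (fun j => Function.update G i Fi j (x n) k) (y n k) := by
    rw [ensError]
    congr 1
    apply Finset.sum_congr rfl
    intro n _
    have e1 : ∑ j : Fin M, sqNorm (Function.update G i Fi j (x n) - y n)
        = ∑ k, ∑ j : Fin M, (Function.update G i Fi j (x n) k - y n k)^2 := by
      simp only [sqNorm, Pi.sub_apply]; exact Finset.sum_comm
    have e2 : ∑ j : Fin M, sqNorm (Function.update G i Fi j (x n)
          - (1/(M:ℝ)) • ∑ l, Function.update G i Fi l (x n))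
        = ∑ k, ∑ j : Fin M, (Function.update G i Fi j (x n) k
            - 1/(M:ℝ) * ∑ l, Function.update G i Fi l (x n) k)^2 := by
      simp only [sqNorm, Pi.sub_apply, Pi.smul_apply, Finset.sum_apply, smul_eq_mul]
      exact Finset.sum_comm
    simp only [scalarLoss, e1, e2, Finset.mul_sum, ← Finset.sum_sub_distrib]
  rw [hrw]
  apply mul_le_mul_of_nonneg_left _ (by positivity)
  apply Finset.sum_le_sum
  intro n _
  apply Finset.sum_le_sum
  intro k _
  have hupd : (fun j => Function.update G i Fi j (x n) k)
      = Function.update (fun j => G j (x n) k) i (Fi (x n) k) := by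
    funext j
    by_cases h : j = i <;> simp [Function.update_apply, h]
  rw [hupd]
  exact hB n k (Fi (x n) k)
end

section
/- Let X be a D×N real matrix, let M ≥ 2, let 0 ≤ λ < M/(M−1), fix i ∈ {1,…,M} and matrices A_j ∈ ℝ^{D×P}, B_j ∈ ℝ^{P×D} for all j ≠ i. Define Y := (1 − λ·(M−1)/M)^{−1} · (I_D − (λ/M)·∑_{j≠i} A_jB_j) · X. Then a pair (A_i, B_i) ∈ ℝ^{D×P} × ℝ^{P×D} minimises E_λ(W, D) over all choices of the i-th module (with the other modules fixed) if and only if it minimises ‖Y − A_i B_i X‖², where ‖·‖ is the Frobenius norm. -/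
open Finset Matrix

/-- Squared Frobenius norm of a real matrix: `‖A‖² = trace (A Aᵀ)`. -/
noncomputable def frobSq {m n : ℕ} (A : Matrix (Fin m) (Fin n) ℝ) : ℝ :=
  Matrix.trace (A * Aᵀ)

/-- The error `E_λ(W, 𝒟)` of a linear Modular Autoencoder on the dataset whose
points are the columns of the `D × N` matrix `X`. -/
noncomputable def maeErrorM {D P M N : ℕ} (lam : ℝ)
    (A : Fin M → Matrix (Fin D) (Fin P) ℝ) (B : Fin M → Matrix (Fin P) (Fin D) ℝ)
    (X : Matrix (Fin D) (Fin N) ℝ) : ℝ :=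
  (1 / ((N : ℝ) * (M : ℝ))) * ∑ i,
    (frobSq (X - A i * B i * X)
      - lam * frobSq (A i * B i * X - (1 / (M : ℝ)) • ∑ k, A k * B k * X))

/-- Frobenius inner product. -/
noncomputable def ip {m n : ℕ} (A B : Matrix (Fin m) (Fin n) ℝ) : ℝ :=
  Matrix.trace (A * Bᵀ)

lemma frobSq_eq_ip {m n : ℕ} (A : Matrix (Fin m) (Fin n) ℝ) : frobSq A = ip A A := rfl

lemma ip_comm {m n : ℕ} (A B : Matrix (Fin m) (Fin n) ℝ) : ip A B = ip B A := by
  rw [ip, ip, ← Matrix.trace_transpose, Matrix.transpose_mul, Matrix.transpose_transpose]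

lemma ip_sub_left {m n : ℕ} (A B C : Matrix (Fin m) (Fin n) ℝ) :
    ip (A - B) C = ip A C - ip B C := by simp [ip, Matrix.sub_mul]

lemma ip_add_left {m n : ℕ} (A B C : Matrix (Fin m) (Fin n) ℝ) :
    ip (A + B) C = ip A C + ip B C := by simp [ip, Matrix.add_mul]

lemma ip_smul_left {m n : ℕ} (c : ℝ) (A B : Matrix (Fin m) (Fin n) ℝ) :
    ip (c • A) B = c * ip A B := by simp [ip, Matrix.smul_mul]

lemma ip_sub_right {m n : ℕ} (A B C : Matrix (Fin m) (Fin n) ℝ) :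
    ip A (B - C) = ip A B - ip A C := by
  rw [ip_comm, ip_sub_left, ip_comm B A, ip_comm C A]

lemma ip_add_right {m n : ℕ} (A B C : Matrix (Fin m) (Fin n) ℝ) :
    ip A (B + C) = ip A B + ip A C := by
  rw [ip_comm, ip_add_left, ip_comm B A, ip_comm C A]

lemma ip_smul_right {m n : ℕ} (c : ℝ) (A B : Matrix (Fin m) (Fin n) ℝ) :
    ip A (c • B) = c * ip A B := by
  rw [ip_comm, ip_smul_left, ip_comm]

lemma ip_sum_left {m n : ℕ} {ι : Type*} (s : Finset ι) (f : ι → Matrix (Fin m) (Fin n) ℝ)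
    (B : Matrix (Fin m) (Fin n) ℝ) : ip (∑ j ∈ s, f j) B = ∑ j ∈ s, ip (f j) B := by
  rw [ip, Matrix.sum_mul, Matrix.trace_sum]; rfl

lemma ip_sum_right {m n : ℕ} {ι : Type*} (s : Finset ι) (f : ι → Matrix (Fin m) (Fin n) ℝ)
    (B : Matrix (Fin m) (Fin n) ℝ) : ip B (∑ j ∈ s, f j) = ∑ j ∈ s, ip B (f j) := by
  rw [ip_comm, ip_sum_left]; exact Finset.sum_congr rfl fun j _ => ip_comm _ _

lemma frobSq_sub {m n : ℕ} (A B : Matrix (Fin m) (Fin n) ℝ) :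
    frobSq (A - B) = ip A A - 2 * ip A B + ip B B := by
  rw [frobSq_eq_ip, ip_sub_left, ip_sub_right, ip_sub_right, ip_comm B A]; ring

lemma frobSq_zero_cols {m : ℕ} (A : Matrix (Fin m) (Fin 0) ℝ) : frobSq A = 0 := by
  simp [frobSq, Matrix.trace, Matrix.mul_apply]

lemma bracket_scalar {D N : ℕ} (X Z S : Matrix (Fin D) (Fin N) ℝ)
    (lam c Mr C1 Kb : ℝ)
    (hM0' : Mr ≠ 0) (hd : Mr - lam * (Mr - 1) ≠ 0)
    (hcv : c = (Mr - lam * (Mr - 1)) / Mr) (hci : c⁻¹ = Mr / (Mr - lam * (Mr - 1)))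
    (hKbdef : Kb = Mr * ip X X - 2 * ip X S + (1 - lam) * C1 + (lam/Mr) * ip S S
      - c⁻¹ * ip X X + (2*lam/Mr) * c⁻¹ * ip X S - (lam^2/Mr^2) * c⁻¹ * ip S S) :
    (frobSq (X - Z) - lam * frobSq (Z - (1/Mr) • (Z + S)))
      + ((Mr - 1) * ip X X - 2 * ip X S + C1
          - lam * (C1 - 2 * ip S ((1/Mr) • (Z + S))
              + (Mr - 1) * ip ((1/Mr) • (Z + S)) ((1/Mr) • (Z + S))))
    = c * frobSq (c⁻¹ • (X - (lam/Mr) • S) - Z) + Kb := by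
  have hZX : ip Z X = ip X Z := ip_comm _ _
  have hSX : ip S X = ip X S := ip_comm _ _
  have hSZ : ip S Z = ip Z S := ip_comm _ _
  simp only [frobSq_sub, ip_smul_left, ip_smul_right, ip_add_left, ip_add_right,
    ip_sub_left, ip_sub_right, hZX, hSX, hSZ, hKbdef, hcv, hci]
  field_simp
  ring

/-- with the other modules fixed and `0 ≤ λ < M/(M-1)`, a pair
`(Aᵢ, Bᵢ)` minimises `E_λ(W, 𝒟)` over choices of the `i`-th module if and only
if it minimises `‖Y − AᵢBᵢX‖²` for
`Y = (1 − λ(M−1)/M)⁻¹ (I_D − (λ/M) ∑_{j≠i} AⱼBⱼ) X`. -/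
theorem mae_single_module_minimiser_iff {D N P M : ℕ} (hM : 2 ≤ M)
    (X : Matrix (Fin D) (Fin N) ℝ)
    (lam : ℝ) (hlam0 : 0 ≤ lam) (hlam : lam < (M : ℝ) / ((M : ℝ) - 1))
    (i : Fin M)
    (A : Fin M → Matrix (Fin D) (Fin P) ℝ) (B : Fin M → Matrix (Fin P) (Fin D) ℝ)
    (Y : Matrix (Fin D) (Fin N) ℝ)
    (hY : Y = (1 - lam * ((M : ℝ) - 1) / (M : ℝ))⁻¹ •
        (((1 : Matrix (Fin D) (Fin D) ℝ)
            - (lam / (M : ℝ)) • ∑ j ∈ Finset.univ.erase i, A j * B j) * X)) :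
    ∀ (Ai : Matrix (Fin D) (Fin P) ℝ) (Bi : Matrix (Fin P) (Fin D) ℝ),
      (∀ (Ai' : Matrix (Fin D) (Fin P) ℝ) (Bi' : Matrix (Fin P) (Fin D) ℝ),
          maeErrorM lam (Function.update A i Ai) (Function.update B i Bi) X
            ≤ maeErrorM lam (Function.update A i Ai') (Function.update B i Bi') X)
        ↔ (∀ (Ai' : Matrix (Fin D) (Fin P) ℝ) (Bi' : Matrix (Fin P) (Fin D) ℝ),
          frobSq (Y - Ai * Bi * X) ≤ frobSq (Y - Ai' * Bi' * X)) := by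
  have hM2 : (2:ℝ) ≤ (M:ℝ) := by exact_mod_cast hM
  have hM0 : (0:ℝ) < (M:ℝ) := by linarith
  have hM0' : (M:ℝ) ≠ 0 := ne_of_gt hM0
  have hM1 : (0:ℝ) < (M:ℝ) - 1 := by linarith
  set c : ℝ := 1 - lam * ((M:ℝ) - 1) / (M:ℝ) with hcdef
  have hc : 0 < c := by
    have h1 : lam * ((M:ℝ) - 1) < M := (lt_div_iff₀ hM1).mp hlam
    have h2 : lam * ((M:ℝ) - 1) / (M:ℝ) < 1 := (div_lt_one hM0).mpr h1
    simp only [hcdef]; linarith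
  have hc0 : c ≠ 0 := ne_of_gt hc
  have hcv : c = ((M:ℝ) - lam * ((M:ℝ) - 1)) / (M:ℝ) := by
    rw [hcdef]; field_simp
  have hd : (M:ℝ) - lam * ((M:ℝ) - 1) ≠ 0 := by
    intro h0
    rw [h0, zero_div] at hcv
    exact hc0 hcv
  have hci : c⁻¹ = (M:ℝ) / ((M:ℝ) - lam * ((M:ℝ) - 1)) := by
    rw [hcv, inv_div]
  set S : Matrix (Fin D) (Fin N) ℝ := ∑ j ∈ Finset.univ.erase i, A j * B j * X with hSdef
  have hYS : Y = c⁻¹ • (X - (lam/(M:ℝ)) • S) := by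
    rw [hY, hSdef]
    congr 1
    rw [Matrix.sub_mul, Matrix.one_mul, Matrix.smul_mul, Matrix.sum_mul]
  set C1 : ℝ := ∑ j ∈ Finset.univ.erase i, ip (A j * B j * X) (A j * B j * X) with hC1def
  set Kb : ℝ := (M:ℝ) * ip X X - 2 * ip X S + (1 - lam) * C1 + (lam/(M:ℝ)) * ip S S
      - c⁻¹ * ip X X + (2*lam/(M:ℝ)) * c⁻¹ * ip X S
      - (lam^2/(M:ℝ)^2) * c⁻¹ * ip S S with hKbdef
  have hcard : ((Finset.univ.erase i).card : ℝ) = (M:ℝ) - 1 := by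
    rw [Finset.card_erase_of_mem (Finset.mem_univ i), Finset.card_univ, Fintype.card_fin]
    have h1 : 1 ≤ M := by omega
    push_cast [h1]
    ring
  -- the bracket identity, for an arbitrary matrix Z in place of AᵢBᵢX
  have hbr : ∀ (Z : Matrix (Fin D) (Fin N) ℝ),
      (frobSq (X - Z) - lam * frobSq (Z - (1/(M:ℝ)) • (Z + S)))
        + ∑ j ∈ Finset.univ.erase i,
            (frobSq (X - A j * B j * X)
              - lam * frobSq (A j * B j * X - (1/(M:ℝ)) • (Z + S)))
      = c * frobSq (Y - Z) + Kb := by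
    intro Z
    have e1 : ∑ j ∈ Finset.univ.erase i, frobSq (X - A j * B j * X)
        = ((M:ℝ) - 1) * ip X X - 2 * ip X S + C1 := by
      rw [Finset.sum_congr rfl (fun j _ => frobSq_sub X (A j * B j * X))]
      rw [Finset.sum_add_distrib, Finset.sum_sub_distrib, Finset.sum_const,
        nsmul_eq_mul, hcard, ← Finset.mul_sum, ← ip_sum_right, ← hSdef, hC1def]
    have e2 : ∑ j ∈ Finset.univ.erase i,
          frobSq (A j * B j * X - (1/(M:ℝ)) • (Z + S))
        = C1 - 2 * ip S ((1/(M:ℝ)) • (Z + S))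
            + ((M:ℝ) - 1) * ip ((1/(M:ℝ)) • (Z + S)) ((1/(M:ℝ)) • (Z + S)) := by
      rw [Finset.sum_congr rfl (fun j _ => frobSq_sub (A j * B j * X) _)]
      rw [Finset.sum_add_distrib, Finset.sum_sub_distrib, Finset.sum_const,
        nsmul_eq_mul, hcard, ← Finset.mul_sum, ← ip_sum_left, ← hSdef, hC1def]
    rw [Finset.sum_sub_distrib, ← Finset.mul_sum, e1, e2, hYS]
    exact bracket_scalar X Z S lam c (M:ℝ) C1 Kb hM0' hd hcv hci hKbdef
  -- the key identity
  have key : ∀ (Ai : Matrix (Fin D) (Fin P) ℝ) (Bi : Matrix (Fin P) (Fin D) ℝ),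
      maeErrorM lam (Function.update A i Ai) (Function.update B i Bi) X
        = (1/((N:ℝ)*(M:ℝ))) * (c * frobSq (Y - Ai * Bi * X) + Kb) := by
    intro Ai Bi
    have hupd : ∀ j ∈ Finset.univ.erase i,
        Function.update A i Ai j * Function.update B i Bi j * X = A j * B j * X := by
      intro j hj
      rw [Function.update_of_ne (Finset.ne_of_mem_erase hj),
        Function.update_of_ne (Finset.ne_of_mem_erase hj)]
    have hsum : ∑ k, Function.update A i Ai k * Function.update B i Bi k * X
        = Ai * Bi * X + S := by
      rw [← Finset.add_sum_erase _ _ (Finset.mem_univ i)]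
      simp only [Function.update_self]
      congr 1
      exact Finset.sum_congr rfl hupd
    unfold maeErrorM
    rw [hsum, ← Finset.add_sum_erase _ _ (Finset.mem_univ i)]
    simp only [Function.update_self]
    rw [Finset.sum_congr rfl (fun j hj => by rw [hupd j hj]), hbr (Ai * Bi * X)]
  intro Ai Bi
  rcases Nat.eq_zero_or_pos N with hN | hN
  · subst hN
    constructor
    · intro _ Ai' Bi'
      rw [frobSq_zero_cols, frobSq_zero_cols]
    · intro _ Ai' Bi'
      rw [key, key]
      norm_num
  · have ht : (0:ℝ) < 1/((N:ℝ)*(M:ℝ)) := by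
      have hN' : (0:ℝ) < (N:ℝ) := by exact_mod_cast hN
      positivity
    have equiv : ∀ f1 f2 : ℝ,
        (1/((N:ℝ)*(M:ℝ))) * (c * f1 + Kb) ≤ (1/((N:ℝ)*(M:ℝ))) * (c * f2 + Kb)
          ↔ f1 ≤ f2 := by
      intro f1 f2
      rw [mul_le_mul_iff_right₀ ht, add_le_add_iff_right, mul_le_mul_iff_right₀ hc]
    constructor
    · intro h Ai' Bi'
      have := h Ai' Bi'
      rw [key, key, equiv] at this
      exact this
    · intro h Ai' Bi'
      rw [key, key, equiv]
      exact h Ai' Bi'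
end

section
/- Let X be a D×N real matrix with Σ := XXᵀ of full rank D, let M ≥ 2, let 0 ≤ λ < M/(M−1), fix i ∈ {1,…,M} and matrices A_j ∈ ℝ^{D×P}, B_j ∈ ℝ^{P×D} for all j ≠ i, and set Z := (λ/M)·∑_{j≠i} A_jB_j and Φ := (I_D − Z)·Σ·(I_D − Z)ᵀ. Suppose A_i ∈ ℝ^{D×P} is a matrix whose P columns are orthonormal eigenvectors of the symmetric matrix Φ corresponding to its P largest eigenvalues (counted with multiplicity), and set B_i := (1 − λ·(M−1)/M)^{−1} · A_iᵀ·(I_D − Z). Then the pair (A_i, B_i) minimises E_λ(W, D) over all choices of the i-th module (A_i', B_i') ∈ ℝ^{D×P} × ℝ^{P×D}, with the other modules held fixed. -/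
open Finset Matrix

section aux
variable {D P : ℕ}

lemma sum_dot {ι : Type*} (s : Finset ι) (f : ι → (Fin D → ℝ)) (w : Fin D → ℝ) :
    (∑ i ∈ s, f i) ⬝ᵥ w = ∑ i ∈ s, f i ⬝ᵥ w := by
  simp only [dotProduct, Finset.sum_apply, Finset.sum_mul]
  exact Finset.sum_comm

lemma dot_sum {ι : Type*} (s : Finset ι) (w : Fin D → ℝ) (f : ι → (Fin D → ℝ)) :
    w ⬝ᵥ (∑ i ∈ s, f i) = ∑ i ∈ s, w ⬝ᵥ f i := by
  simp only [dotProduct, Finset.sum_apply, Finset.mul_sum]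
  exact Finset.sum_comm

lemma euc_inner_eq_dot (x y : EuclideanSpace ℝ (Fin D)) :
    (inner ℝ x y : ℝ) = (x : Fin D → ℝ) ⬝ᵥ (y : Fin D → ℝ) := by
  simp [PiLp.inner_apply, dotProduct, mul_comm]

lemma dot_expand {ι : Type*} [Fintype ι] [DecidableEq ι]
    (c d : ι → ℝ) (u : ι → Fin D → ℝ)
    (huorth : ∀ β γ, u β ⬝ᵥ u γ = if β = γ then 1 else 0) :
    (∑ γ, c γ • u γ) ⬝ᵥ (∑ β, d β • u β) = ∑ β, c β * d β := by
  rw [sum_dot]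
  refine Finset.sum_congr rfl fun γ _ => ?_
  rw [smul_dotProduct, dot_sum]
  simp only [dotProduct_smul, huorth, smul_eq_mul, mul_ite, mul_one, mul_zero]
  simp

lemma rayleigh_aux (Φ : Matrix (Fin D) (Fin D) ℝ)
    (hsym : Φ.IsHermitian) (a : Fin P → Fin D → ℝ) (μ : Fin P → ℝ)
    (ha : ∀ k l, a k ⬝ᵥ a l = if k = l then 1 else 0)
    (heig : ∀ k, Φ *ᵥ a k = μ k • a k)
    (hmax : ∀ (ν : ℝ) (v : Fin D → ℝ), v ≠ 0 → Φ *ᵥ v = ν • v →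
        (∀ k, v ⬝ᵥ a k = 0) → ∀ k, ν ≤ μ k)
    (k₀ : Fin P)
    (b : Fin D → ℝ) (hb : ∀ k, b ⬝ᵥ a k = 0) :
    b ⬝ᵥ (Φ *ᵥ b) ≤ μ k₀ * (b ⬝ᵥ b) := by
  classical
  have hsymT : Φᵀ = Φ := by
    have := hsym.eq
    simpa using this
  set u : Fin D → (Fin D → ℝ) := fun β => ⇑(hsym.eigenvectorBasis β) with hu
  set ν : Fin D → ℝ := hsym.eigenvalues with hν
  have huν : ∀ β, Φ *ᵥ u β = ν β • u β := fun β => hsym.mulVec_eigenvectorBasis β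
  have huorth : ∀ β γ, u β ⬝ᵥ u γ = if β = γ then 1 else 0 := by
    intro β γ
    have h1 := hsym.eigenvectorBasis.orthonormal
    rw [orthonormal_iff_ite] at h1
    have h2 := h1 β γ
    rw [euc_inner_eq_dot] at h2
    simpa using h2
  set c : Fin D → ℝ := fun β => u β ⬝ᵥ b with hc
  have hbrep : b = ∑ β, c β • u β := by
    have h0 := hsym.eigenvectorBasis.sum_repr' (WithLp.toLp 2 b : EuclideanSpace ℝ (Fin D))
    have h2 : ∀ β, (inner ℝ (hsym.eigenvectorBasis β) (WithLp.toLp 2 b : EuclideanSpace ℝ (Fin D)) : ℝ) = c β := by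
      intro β; rw [euc_inner_eq_dot]
    calc b = ∑ β, (inner ℝ (hsym.eigenvectorBasis β) (WithLp.toLp 2 b : EuclideanSpace ℝ (Fin D)) : ℝ) •
            ⇑(hsym.eigenvectorBasis β) := by
              have h3 := congrArg WithLp.ofLp h0
              simp only [WithLp.ofLp_sum, WithLp.ofLp_smul] at h3
              exact h3.symm
      _ = ∑ β, c β • u β := by
          refine Finset.sum_congr rfl fun β _ => ?_
          rw [h2 β]
  have hdotΦ : ∀ v w : Fin D → ℝ, v ⬝ᵥ (Φ *ᵥ w) = (Φ *ᵥ v) ⬝ᵥ w := by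
    intro v w
    rw [Matrix.dotProduct_mulVec, ← Matrix.mulVec_transpose, hsymT]
  have hscalar : ∀ k β, μ k * (a k ⬝ᵥ u β) = ν β * (a k ⬝ᵥ u β) := by
    intro k β
    have h1 : a k ⬝ᵥ (Φ *ᵥ u β) = (Φ *ᵥ a k) ⬝ᵥ u β := hdotΦ _ _
    rw [huν, heig] at h1
    rw [dotProduct_smul, smul_dotProduct] at h1
    simpa [mul_comm] using h1.symm
  have key : ∀ β, ν β * c β ^ 2 ≤ μ k₀ * c β ^ 2 := by
    intro β
    by_cases hcβ : c β = 0
    · simp [hcβ]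
    · have hνμ : ν β ≤ μ k₀ := by
        set q : Fin D → ℝ := u β - ∑ k, (a k ⬝ᵥ u β) • a k with hq
        have hqa : ∀ k, q ⬝ᵥ a k = 0 := by
          intro k
          rw [hq, sub_dotProduct, sum_dot]
          simp only [smul_dotProduct, ha, smul_eq_mul, mul_ite, mul_one, mul_zero]
          simp [dotProduct_comm]
        have hqb : q ⬝ᵥ b = c β := by
          rw [hq, sub_dotProduct, sum_dot]
          have hz : ∀ k, (a k ⬝ᵥ u β) • a k ⬝ᵥ b = 0 := by
            intro k
            rw [smul_dotProduct, dotProduct_comm (a k) b, hb k, smul_eq_mul,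
              mul_zero]
          simp only [hz, Finset.sum_const_zero, sub_zero]
          rfl
        have hq0 : q ≠ 0 := by
          intro h
          rw [h] at hqb
          simp [zero_dotProduct] at hqb
          exact hcβ hqb.symm
        have hqeig : Φ *ᵥ q = ν β • q := by
          rw [hq, Matrix.mulVec_sub]
          have hsum : Φ *ᵥ (∑ k, (a k ⬝ᵥ u β) • a k) = ∑ k, (a k ⬝ᵥ u β) • (Φ *ᵥ a k) := by
            simp only [← Matrix.mulVecLin_apply, map_sum]
            exact Finset.sum_congr rfl fun k _ => LinearMap.map_smul _ _ _
          rw [hsum, huν]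
          have hterm : ∀ k ∈ Finset.univ, (a k ⬝ᵥ u β) • (Φ *ᵥ a k)
              = ν β • ((a k ⬝ᵥ u β) • a k) := by
            intro k _
            rw [heig k, smul_smul, smul_smul]
            congr 1
            rw [mul_comm, hscalar k β]
          rw [Finset.sum_congr rfl hterm, ← Finset.smul_sum, ← smul_sub]
        exact hmax (ν β) q hq0 hqeig hqa k₀
      nlinarith [sq_nonneg (c β)]
  have hΦb : Φ *ᵥ b = ∑ β, (ν β * c β) • u β := by
    conv_lhs => rw [hbrep]
    have hsum : Φ *ᵥ (∑ β, c β • u β) = ∑ β, c β • (Φ *ᵥ u β) := by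
      simp only [← Matrix.mulVecLin_apply, map_sum]
      exact Finset.sum_congr rfl fun β _ => LinearMap.map_smul _ _ _
    rw [hsum]
    refine Finset.sum_congr rfl fun β _ => ?_
    rw [huν, smul_smul, mul_comm]
  have h1 : b ⬝ᵥ (Φ *ᵥ b) = ∑ β, ν β * c β ^ 2 := by
    rw [hΦb]
    conv_lhs => rw [hbrep]
    rw [dot_expand c (fun β => ν β * c β) u huorth]
    exact Finset.sum_congr rfl fun β _ => by ring
  have h2 : b ⬝ᵥ b = ∑ β, c β ^ 2 := by
    conv_lhs => rw [hbrep]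
    rw [dot_expand c c u huorth]
    exact Finset.sum_congr rfl fun β _ => by ring
  rw [h1, h2, Finset.mul_sum]
  exact Finset.sum_le_sum fun β _ => key β

end aux

section aux2
variable {D P : ℕ}

lemma dot_self_nonneg (v : Fin D → ℝ) : 0 ≤ v ⬝ᵥ v :=
  Finset.sum_nonneg fun i _ => mul_self_nonneg _

lemma dot_mulVec_symm (Φ : Matrix (Fin D) (Fin D) ℝ) (hsymT : Φᵀ = Φ)
    (v w : Fin D → ℝ) : v ⬝ᵥ (Φ *ᵥ w) = (Φ *ᵥ v) ⬝ᵥ w := by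
  rw [Matrix.dotProduct_mulVec, ← Matrix.mulVec_transpose, hsymT]

lemma kyfan {r : ℕ} (Φ : Matrix (Fin D) (Fin D) ℝ) (hsym : Φ.IsHermitian)
    (a : Fin P → Fin D → ℝ) (μ : Fin P → ℝ)
    (ha : ∀ k l, a k ⬝ᵥ a l = if k = l then 1 else 0)
    (heig : ∀ k, Φ *ᵥ a k = μ k • a k)
    (hmax : ∀ (ν : ℝ) (v : Fin D → ℝ), v ≠ 0 → Φ *ᵥ v = ν • v →
        (∀ k, v ⬝ᵥ a k = 0) → ∀ k, ν ≤ μ k)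
    (hμ0 : ∀ k, 0 ≤ μ k)
    (e : Fin r → Fin D → ℝ)
    (he : ∀ s t, e s ⬝ᵥ e t = if s = t then 1 else 0)
    (hr : r ≤ P) :
    ∑ s, e s ⬝ᵥ (Φ *ᵥ e s) ≤ ∑ k, μ k := by
  classical
  have hsymT : Φᵀ = Φ := by simpa using hsym.eq
  rcases Nat.eq_zero_or_pos P with hP | hP
  · subst hP
    have hr0 : r = 0 := Nat.le_zero.mp hr
    subst hr0
    simp
  · have : Nonempty (Fin P) := ⟨⟨0, hP⟩⟩
    obtain ⟨k₀, -, hk₀⟩ := Finset.exists_min_image Finset.univ μ ⟨Classical.arbitrary (Fin P),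
      Finset.mem_univ _⟩
    have hk₀' : ∀ k, μ k₀ ≤ μ k := fun k => hk₀ k (Finset.mem_univ k)
    set t : Fin r → Fin P → ℝ := fun s k => e s ⬝ᵥ a k with ht
    set b : Fin r → Fin D → ℝ := fun s => e s - ∑ k, t s k • a k with hbdef
    have hesplit : ∀ s, e s = (∑ k, t s k • a k) + b s := by
      intro s
      simp [hbdef]
    have f1 : ∀ s k, b s ⬝ᵥ a k = 0 := by
      intro s k
      rw [hbdef]
      simp only
      rw [sub_dotProduct, sum_dot]
      simp only [smul_dotProduct, ha, smul_eq_mul, mul_ite, mul_one, mul_zero]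
      simp [ht]
    have f1' : ∀ s k, a k ⬝ᵥ b s = 0 := fun s k => by
      rw [dotProduct_comm]; exact f1 s k
    have hΦe : ∀ s, Φ *ᵥ e s = (∑ k, (μ k * t s k) • a k) + Φ *ᵥ b s := by
      intro s
      conv_lhs => rw [hesplit s]
      rw [Matrix.mulVec_add]
      congr 1
      have hsum : Φ *ᵥ (∑ k, t s k • a k) = ∑ k, t s k • (Φ *ᵥ a k) := by
        simp only [← Matrix.mulVecLin_apply, map_sum]
        exact Finset.sum_congr rfl fun k _ => LinearMap.map_smul _ _ _
      rw [hsum]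
      refine Finset.sum_congr rfl fun k _ => ?_
      rw [heig k, smul_smul, mul_comm]
    have f2 : ∀ s, e s ⬝ᵥ (Φ *ᵥ e s) = (∑ k, μ k * t s k ^ 2) + b s ⬝ᵥ (Φ *ᵥ b s) := by
      intro s
      rw [hΦe s]
      conv_lhs => rw [hesplit s]
      rw [add_dotProduct, dotProduct_add, dotProduct_add]
      have e1 : (∑ k, t s k • a k) ⬝ᵥ (∑ k, (μ k * t s k) • a k) = ∑ k, μ k * t s k ^ 2 := by
        rw [dot_expand (t s) (fun k => μ k * t s k) a ha]
        exact Finset.sum_congr rfl fun k _ => by ring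
      have e2 : (∑ k, t s k • a k) ⬝ᵥ (Φ *ᵥ b s) = 0 := by
        rw [sum_dot]
        refine Finset.sum_eq_zero fun k _ => ?_
        rw [smul_dotProduct, dot_mulVec_symm Φ hsymT, heig k,
          smul_dotProduct, f1' s k]
        simp
      have e3 : (b s) ⬝ᵥ (∑ k, (μ k * t s k) • a k) = 0 := by
        rw [dot_sum]
        refine Finset.sum_eq_zero fun k _ => ?_
        rw [dotProduct_smul, f1 s k]
        simp
      rw [e1, e2, e3]
      ring
    have f3 : ∀ s, b s ⬝ᵥ b s = 1 - ∑ k, t s k ^ 2 := by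
      intro s
      rw [hbdef]
      simp only
      rw [sub_dotProduct, dotProduct_sub, dotProduct_sub]
      rw [he s s, if_pos rfl]
      rw [dot_sum, sum_dot]
      have g1 : ∑ k, e s ⬝ᵥ (t s k • a k) = ∑ k, t s k ^ 2 := by
        refine Finset.sum_congr rfl fun k _ => ?_
        rw [dotProduct_smul]
        simp [ht, sq, mul_comm]
      have g2 : ∑ k, (t s k • a k) ⬝ᵥ e s = ∑ k, t s k ^ 2 := by
        refine Finset.sum_congr rfl fun k _ => ?_
        rw [smul_dotProduct, dotProduct_comm]
        simp [ht, sq, mul_comm]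
      have g3 : (∑ k, t s k • a k) ⬝ᵥ (∑ k, t s k • a k) = ∑ k, t s k ^ 2 := by
        rw [dot_expand (t s) (t s) a ha]
        exact Finset.sum_congr rfl fun k _ => by ring
      rw [g1, g2, g3]
      ring
    have f4 : ∀ s, b s ⬝ᵥ (Φ *ᵥ b s) ≤ μ k₀ * (b s ⬝ᵥ b s) := by
      intro s
      exact rayleigh_aux Φ hsym a μ ha heig hmax k₀ (b s) (f1 s)
    have f5 : ∀ k, ∑ s, t s k ^ 2 ≤ 1 := by
      intro k
      have h0 : 0 ≤ (a k - ∑ s, t s k • e s) ⬝ᵥ (a k - ∑ s, t s k • e s) :=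
        dot_self_nonneg _
      rw [sub_dotProduct, dotProduct_sub, dotProduct_sub] at h0
      rw [ha k k, if_pos rfl] at h0
      rw [dot_sum, sum_dot] at h0
      have g1 : ∑ s, a k ⬝ᵥ (t s k • e s) = ∑ s, t s k ^ 2 := by
        refine Finset.sum_congr rfl fun s _ => ?_
        rw [dotProduct_smul, dotProduct_comm]
        simp [ht, sq, mul_comm]
      have g2 : ∑ s, (t s k • e s) ⬝ᵥ a k = ∑ s, t s k ^ 2 := by
        refine Finset.sum_congr rfl fun s _ => ?_
        rw [smul_dotProduct]
        simp [ht, sq, mul_comm]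
      have g3 : (∑ s, t s k • e s) ⬝ᵥ (∑ s, t s k • e s) = ∑ s, t s k ^ 2 := by
        rw [dot_expand (fun s => t s k) (fun s => t s k) e he]
        exact Finset.sum_congr rfl fun s _ => by ring
      rw [g1, g2, g3] at h0
      linarith
    have f6 : ∀ s, 0 ≤ 1 - ∑ k, t s k ^ 2 := by
      intro s
      rw [← f3 s]
      exact dot_self_nonneg _
    calc ∑ s, e s ⬝ᵥ (Φ *ᵥ e s)
        = ∑ s, ((∑ k, μ k * t s k ^ 2) + b s ⬝ᵥ (Φ *ᵥ b s)) :=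
          Finset.sum_congr rfl fun s _ => f2 s
      _ ≤ ∑ s, ((∑ k, μ k * t s k ^ 2) + μ k₀ * (1 - ∑ k, t s k ^ 2)) := by
          refine Finset.sum_le_sum fun s _ => ?_
          have h4 := f4 s
          rw [f3 s] at h4
          linarith
      _ = (∑ k, μ k * ∑ s, t s k ^ 2) + μ k₀ * ((r : ℝ) - ∑ k, ∑ s, t s k ^ 2) := by
          rw [Finset.sum_add_distrib]
          congr 1
          · rw [Finset.sum_comm]
            exact Finset.sum_congr rfl fun k _ => by rw [Finset.mul_sum]
          · rw [← Finset.mul_sum]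
            congr 1
            rw [Finset.sum_sub_distrib, Finset.sum_const, Finset.card_univ, Fintype.card_fin,
              nsmul_eq_mul, mul_one, Finset.sum_comm]
      _ ≤ (∑ k, μ k * ∑ s, t s k ^ 2) + μ k₀ * ((P : ℝ) - ∑ k, ∑ s, t s k ^ 2) := by
          have hrP : (r : ℝ) ≤ (P : ℝ) := Nat.cast_le.mpr hr
          have hm := hμ0 k₀
          nlinarith
      _ = ∑ k, (μ k * ∑ s, t s k ^ 2 + μ k₀ * (1 - ∑ s, t s k ^ 2)) := by
          rw [Finset.sum_add_distrib]
          congr 1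
          rw [← Finset.mul_sum, Finset.sum_sub_distrib, Finset.sum_const, Finset.card_univ,
            Fintype.card_fin, nsmul_eq_mul, mul_one]
      _ ≤ ∑ k, μ k := by
          refine Finset.sum_le_sum fun k _ => ?_
          have h1 := hk₀' k
          have h2 := f5 k
          have h3 : (0:ℝ) ≤ ∑ s, t s k ^ 2 := Finset.sum_nonneg fun s _ => sq_nonneg _
          nlinarith
end aux2

section aux3
variable {D P N : ℕ}

lemma proj_lower {r : ℕ} (e : Fin r → Fin D → ℝ)
    (he : ∀ s t, e s ⬝ᵥ e t = if s = t then 1 else 0)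
    (w : Fin D → ℝ) (d : Fin r → ℝ) (v : Fin D → ℝ) (hv : v = ∑ s, d s • e s) :
    w ⬝ᵥ w - ∑ s, (e s ⬝ᵥ w) ^ 2 ≤ (v - w) ⬝ᵥ (v - w) := by
  classical
  set c : Fin r → ℝ := fun s => e s ⬝ᵥ w with hcdef
  have hvv : v ⬝ᵥ v = ∑ s, d s ^ 2 := by
    rw [hv, dot_expand d d e he]
    exact Finset.sum_congr rfl fun s _ => by ring
  have hvw : v ⬝ᵥ w = ∑ s, d s * c s := by
    rw [hv, sum_dot]
    exact Finset.sum_congr rfl fun s _ => by rw [smul_dotProduct]; rfl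
  have hwv : w ⬝ᵥ v = v ⬝ᵥ w := dotProduct_comm _ _
  have hexpand : (v - w) ⬝ᵥ (v - w) = v ⬝ᵥ v - 2 * (v ⬝ᵥ w) + w ⬝ᵥ w := by
    rw [sub_dotProduct, dotProduct_sub, dotProduct_sub, hwv]
    ring
  have hnn : (0:ℝ) ≤ ∑ s, (d s - c s) ^ 2 :=
    Finset.sum_nonneg fun s _ => sq_nonneg _
  have hsq : ∑ s, (d s - c s) ^ 2
      = (∑ s, d s ^ 2) - 2 * (∑ s, d s * c s) + ∑ s, c s ^ 2 := by
    rw [Finset.mul_sum, ← Finset.sum_sub_distrib, ← Finset.sum_add_distrib]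
    exact Finset.sum_congr rfl fun s _ => by ring
  have hcs : ∑ s, (e s ⬝ᵥ w) ^ 2 = ∑ s, c s ^ 2 := rfl
  rw [hcs, hexpand, hvv, hvw]
  linarith

end aux3

section aux4
variable {D P N : ℕ}

lemma frobSq_eq_sum_cols (U : Matrix (Fin D) (Fin N) ℝ) :
    frobSq U = ∑ n, (fun d => U d n) ⬝ᵥ (fun d => U d n) := by
  rw [frobSq, Matrix.trace]
  simp only [Matrix.diag, Matrix.mul_apply, Matrix.transpose_apply, dotProduct]
  exact Finset.sum_comm

lemma eckart_lower (W : Matrix (Fin D) (Fin N) ℝ)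
    (a : Fin P → Fin D → ℝ) (μ : Fin P → ℝ)
    (ha : ∀ k l, a k ⬝ᵥ a l = if k = l then 1 else 0)
    (heig : ∀ k, (W * Wᵀ) *ᵥ a k = μ k • a k)
    (hmax : ∀ (ν : ℝ) (v : Fin D → ℝ), v ≠ 0 → (W * Wᵀ) *ᵥ v = ν • v →
        (∀ k, v ⬝ᵥ a k = 0) → ∀ k, ν ≤ μ k)
    (A' : Matrix (Fin D) (Fin P) ℝ) (C : Matrix (Fin P) (Fin N) ℝ) :
    Matrix.trace (W * Wᵀ) - ∑ k, μ k ≤ frobSq (A' * C - W) := by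
  classical
  set Φ : Matrix (Fin D) (Fin D) ℝ := W * Wᵀ with hΦdef
  have hWt : Wᵀ = Wᴴ := by
    ext d n
    simp [Matrix.conjTranspose_apply]
  have hsym : Φ.IsHermitian := by
    rw [hΦdef, hWt]
    exact Matrix.isHermitian_mul_conjTranspose_self W
  -- nonnegativity of μ
  have hμ0 : ∀ k, 0 ≤ μ k := by
    intro k
    have h1 : a k ⬝ᵥ (Φ *ᵥ a k) = μ k := by
      rw [heig k, dotProduct_smul, ha k k]
      simp
    have h2 : a k ⬝ᵥ (Φ *ᵥ a k) = (Wᵀ *ᵥ a k) ⬝ᵥ (Wᵀ *ᵥ a k) := by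
      rw [hΦdef, ← Matrix.mulVec_mulVec, Matrix.dotProduct_mulVec,
        ← Matrix.mulVec_transpose]
    rw [h2] at h1
    rw [← h1]
    exact dot_self_nonneg _
  -- the range of A' and an orthonormal basis of it
  set V : Submodule ℝ (EuclideanSpace ℝ (Fin D)) :=
    LinearMap.range (Matrix.toEuclideanLin A') with hVdef
  have hrP : Module.finrank ℝ V ≤ P := by
    have := LinearMap.finrank_range_le (Matrix.toEuclideanLin A')
    simpa using this
  set r : ℕ := Module.finrank ℝ V with hrdef
  set ob : OrthonormalBasis (Fin r) ℝ V := stdOrthonormalBasis ℝ V with hobdef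
  set e : Fin r → Fin D → ℝ := fun s => ((ob s : EuclideanSpace ℝ (Fin D)) : Fin D → ℝ)
    with hedef
  have he : ∀ s t, e s ⬝ᵥ e t = if s = t then 1 else 0 := by
    intro s t
    have h1 := ob.orthonormal
    rw [orthonormal_iff_ite] at h1
    have h2 := h1 s t
    rw [Submodule.coe_inner] at h2
    rw [euc_inner_eq_dot] at h2
    simpa using h2
  -- columns
  have hcolmem : ∀ n, WithLp.toLp 2 (fun d => (A' * C) d n) ∈ V := by
    intro n
    refine ⟨WithLp.toLp 2 (fun p => C p n), ?_⟩
    ext d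
    simp [Matrix.toEuclideanLin, Matrix.mulVec, Matrix.mul_apply, dotProduct]
  have hrepr : ∀ n, ∃ d : Fin r → ℝ, (fun dd => (A' * C) dd n) = ∑ s, d s • e s := by
    intro n
    refine ⟨fun s => ob.repr ⟨_, hcolmem n⟩ s, ?_⟩
    have h0 := ob.sum_repr ⟨WithLp.toLp 2 (fun dd => (A' * C) dd n), hcolmem n⟩
    have h1 := congrArg (Submodule.subtype V) h0
    rw [map_sum] at h1
    simp only [Submodule.subtype_apply, SetLike.val_smul] at h1
    have h3 := congrArg WithLp.ofLp h1
    simp only [WithLp.ofLp_sum, WithLp.ofLp_smul] at h3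
    exact h3.symm
  -- per-column lower bound, summed
  have hcols : frobSq (A' * C - W)
      ≥ ∑ n, ((fun d => W d n) ⬝ᵥ (fun d => W d n) - ∑ s, (e s ⬝ᵥ (fun d => W d n)) ^ 2) := by
    rw [frobSq_eq_sum_cols]
    refine Finset.sum_le_sum fun n _ => ?_
    obtain ⟨d, hd⟩ := hrepr n
    have := proj_lower e he (fun dd => W dd n) d (fun dd => (A' * C) dd n) hd
    have hcoleq : (fun dd => (A' * C - W) dd n)
        = (fun dd => (A' * C) dd n) - (fun dd => W dd n) := by
      ext dd; simp [Matrix.sub_apply]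
    rw [hcoleq]
    exact this
  -- trace identity
  have htr : Matrix.trace (W * Wᵀ) = ∑ n, (fun d => W d n) ⬝ᵥ (fun d => W d n) := by
    rw [Matrix.trace]
    simp only [Matrix.diag, Matrix.mul_apply, Matrix.transpose_apply, dotProduct]
    exact Finset.sum_comm
  -- Ky Fan bound
  have hswap : ∑ n, ∑ s, (e s ⬝ᵥ (fun d => W d n)) ^ 2 = ∑ s, e s ⬝ᵥ (Φ *ᵥ e s) := by
    rw [Finset.sum_comm]
    refine Finset.sum_congr rfl fun s _ => ?_
    have h1 : Φ *ᵥ e s = W *ᵥ (Wᵀ *ᵥ e s) := by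
      rw [hΦdef, ← Matrix.mulVec_mulVec]
    rw [h1, Matrix.dotProduct_mulVec, ← Matrix.mulVec_transpose]
    rw [dotProduct]
    refine Finset.sum_congr rfl fun n _ => ?_
    have h2 : (Wᵀ *ᵥ e s) n = e s ⬝ᵥ (fun d => W d n) := by
      rw [Matrix.mulVec, dotProduct, dotProduct]
      exact Finset.sum_congr rfl fun d _ => by rw [Matrix.transpose_apply, mul_comm]
    rw [h2]
    ring
  have hkf : ∑ s, e s ⬝ᵥ (Φ *ᵥ e s) ≤ ∑ k, μ k :=
    kyfan Φ hsym a μ ha heig hmax hμ0 e he hrP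
  have hsum : ∑ n, ((fun d => W d n) ⬝ᵥ (fun d => W d n) - ∑ s, (e s ⬝ᵥ (fun d => W d n)) ^ 2)
      = Matrix.trace (W * Wᵀ) - ∑ n, ∑ s, (e s ⬝ᵥ (fun d => W d n)) ^ 2 := by
    rw [Finset.sum_sub_distrib, htr]
  rw [hsum, hswap] at hcols
  linarith

end aux4

section aux5
variable {D N : ℕ}

noncomputable def ipm (U V : Matrix (Fin D) (Fin N) ℝ) : ℝ := Matrix.trace (U * Vᵀ)

lemma frobSq_eq_ipm (U : Matrix (Fin D) (Fin N) ℝ) : frobSq U = ipm U U := rfl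

lemma ipm_symm (U V : Matrix (Fin D) (Fin N) ℝ) : ipm U V = ipm V U := by
  rw [ipm, ipm, ← Matrix.trace_transpose (U * Vᵀ), Matrix.transpose_mul,
    Matrix.transpose_transpose]

lemma ipm_add_left (U V W : Matrix (Fin D) (Fin N) ℝ) :
    ipm (U + V) W = ipm U W + ipm V W := by
  rw [ipm, ipm, ipm, Matrix.add_mul, Matrix.trace_add]

lemma ipm_sub_left (U V W : Matrix (Fin D) (Fin N) ℝ) :
    ipm (U - V) W = ipm U W - ipm V W := by
  rw [ipm, ipm, ipm, Matrix.sub_mul, Matrix.trace_sub]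

lemma ipm_smul_left (a : ℝ) (U W : Matrix (Fin D) (Fin N) ℝ) :
    ipm (a • U) W = a * ipm U W := by
  rw [ipm, ipm, Matrix.smul_mul, Matrix.trace_smul, smul_eq_mul]

lemma ipm_add_right (U V W : Matrix (Fin D) (Fin N) ℝ) :
    ipm U (V + W) = ipm U V + ipm U W := by
  rw [ipm_symm, ipm_add_left, ipm_symm V U, ipm_symm W U]

lemma ipm_sub_right (U V W : Matrix (Fin D) (Fin N) ℝ) :
    ipm U (V - W) = ipm U V - ipm U W := by
  rw [ipm_symm, ipm_sub_left, ipm_symm V U, ipm_symm W U]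

lemma ipm_smul_right (a : ℝ) (U W : Matrix (Fin D) (Fin N) ℝ) :
    ipm U (a • W) = a * ipm U W := by
  rw [ipm_symm, ipm_smul_left, ipm_symm W U]

lemma ipm_sum_left {ι : Type*} (s : Finset ι) (f : ι → Matrix (Fin D) (Fin N) ℝ)
    (W : Matrix (Fin D) (Fin N) ℝ) :
    ipm (∑ j ∈ s, f j) W = ∑ j ∈ s, ipm (f j) W := by
  rw [ipm, Matrix.sum_mul, Matrix.trace_sum]
  rfl

lemma frobSq_sub_expand (U V : Matrix (Fin D) (Fin N) ℝ) :
    frobSq (U - V) = frobSq U - 2 * ipm U V + frobSq V := by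
  rw [frobSq_eq_ipm, frobSq_eq_ipm, frobSq_eq_ipm, ipm_sub_left, ipm_sub_right, ipm_sub_right,
    ipm_symm V U]
  ring

lemma frobSq_add_expand (U V : Matrix (Fin D) (Fin N) ℝ) :
    frobSq (U + V) = frobSq U + 2 * ipm U V + frobSq V := by
  rw [frobSq_eq_ipm, frobSq_eq_ipm, frobSq_eq_ipm, ipm_add_left, ipm_add_right, ipm_add_right,
    ipm_symm V U]
  ring

lemma frobSq_smul (a : ℝ) (U : Matrix (Fin D) (Fin N) ℝ) :
    frobSq (a • U) = a ^ 2 * frobSq U := by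
  rw [frobSq_eq_ipm, frobSq_eq_ipm, ipm_smul_left, ipm_smul_right]
  ring

lemma mean_identity {M : ℕ} (hM : (M : ℝ) ≠ 0) (Y : Fin M → Matrix (Fin D) (Fin N) ℝ) :
    ∑ m, frobSq (Y m - (1 / (M : ℝ)) • ∑ k, Y k)
      = ∑ m, frobSq (Y m) - (1 / (M : ℝ)) * frobSq (∑ k, Y k) := by
  have h1 : ∀ m, frobSq (Y m - (1 / (M : ℝ)) • ∑ k, Y k)
      = frobSq (Y m) - 2 * ((1:ℝ)/M) * ipm (Y m) (∑ k, Y k)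
        + (1/(M:ℝ))^2 * frobSq (∑ k, Y k) := by
    intro m
    rw [frobSq_sub_expand, ipm_smul_right, frobSq_smul]
    ring
  rw [Finset.sum_congr rfl fun m _ => h1 m]
  rw [Finset.sum_add_distrib, Finset.sum_sub_distrib, ← Finset.mul_sum,
    ← Finset.sum_mul]
  rw [show ∑ m, ipm (Y m) (∑ k, Y k) = frobSq (∑ k, Y k) by
    rw [frobSq_eq_ipm, ← ipm_sum_left]]
  rw [Finset.sum_const, Finset.card_univ, Fintype.card_fin, nsmul_eq_mul]
  field_simp
  ring

end aux5

section aux6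
variable {D P M N : ℕ}

lemma err_formula_general (hM : (M:ℝ) ≠ 0) (lam c : ℝ)
    (hc : c = 1 - lam * ((M:ℝ)-1)/(M:ℝ)) (hc0 : c ≠ 0)
    (i : Fin M) (Y : Fin M → Matrix (Fin D) (Fin N) ℝ)
    (X S₀ W : Matrix (Fin D) (Fin N) ℝ)
    (hS₀ : S₀ = ∑ j ∈ Finset.univ.erase i, Y j)
    (hW : W = X - (lam/(M:ℝ)) • S₀) :
    ∑ m, (frobSq (X - Y m) - lam * frobSq (Y m - (1/(M:ℝ)) • ∑ k, Y k))
      = (∑ j ∈ Finset.univ.erase i, (frobSq (X - Y j) - lam * frobSq (Y j)))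
        + frobSq X + (lam/(M:ℝ)) * frobSq S₀ - (1/c) * frobSq W
        + (1/c) * frobSq (c • Y i - W) := by
  classical
  rw [Finset.sum_sub_distrib, ← Finset.mul_sum, mean_identity hM Y]
  rw [← Finset.add_sum_erase Finset.univ (fun m => frobSq (X - Y m)) (Finset.mem_univ i)]
  rw [← Finset.add_sum_erase Finset.univ (fun m => frobSq (Y m)) (Finset.mem_univ i)]
  have hS : ∑ k, Y k = Y i + S₀ := by
    rw [hS₀, ← Finset.add_sum_erase Finset.univ Y (Finset.mem_univ i)]
  rw [hS]
  rw [frobSq_add_expand (Y i) S₀]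
  rw [frobSq_sub_expand X (Y i)]
  have hfcW : frobSq (c • Y i - W) = c^2 * frobSq (Y i)
      - 2 * c * (ipm X (Y i) - (lam/(M:ℝ)) * ipm (Y i) S₀) + frobSq W := by
    rw [frobSq_sub_expand, frobSq_smul, ipm_smul_left, hW, ipm_sub_right, ipm_smul_right,
      ipm_symm (Y i) X]
    ring
  rw [Finset.sum_sub_distrib, ← Finset.mul_sum]
  have hkey : (1/c) * frobSq (c • Y i - W) - (1/c) * frobSq W
      = c * frobSq (Y i) - 2 * ipm X (Y i) + 2 * (lam/(M:ℝ)) * ipm (Y i) S₀ := by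
    rw [hfcW]
    field_simp
    ring
  have hc' : c = 1 - lam + lam/(M:ℝ) := by
    rw [hc]
    field_simp
    ring
  linear_combination (-1 : ℝ) * hkey + (-(frobSq (Y i))) * hc'
end aux6

/-- with `Σ = XXᵀ` of full rank, the other modules fixed,
`0 ≤ λ < M/(M-1)`, `Z = (λ/M) ∑_{j≠i} AⱼBⱼ` and `Φ = (I−Z) Σ (I−Z)ᵀ`, if the
columns of `Aᵢ` are orthonormal eigenvectors of `Φ` for its `P` largest
eigenvalues and `Bᵢ = (1 − λ(M−1)/M)⁻¹ Aᵢᵀ (I − Z)`, then `(Aᵢ, Bᵢ)` minimises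
`E_λ(W, 𝒟)` over all choices of the `i`-th module. -/
theorem mae_single_module_eigen_minimiser {D N P M : ℕ} (hM : 2 ≤ M)
    (X : Matrix (Fin D) (Fin N) ℝ) (hX : IsUnit (X * Xᵀ))
    (lam : ℝ) (hlam0 : 0 ≤ lam) (hlam : lam < (M : ℝ) / ((M : ℝ) - 1))
    (i : Fin M)
    (A : Fin M → Matrix (Fin D) (Fin P) ℝ) (B : Fin M → Matrix (Fin P) (Fin D) ℝ)
    (Z Φ : Matrix (Fin D) (Fin D) ℝ)
    (hZ : Z = (lam / (M : ℝ)) • ∑ j ∈ Finset.univ.erase i, A j * B j)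
    (hΦ : Φ = (1 - Z) * (X * Xᵀ) * (1 - Z)ᵀ)
    (Ai : Matrix (Fin D) (Fin P) ℝ) (μ : Fin P → ℝ)
    -- the columns of `Ai` are orthonormal:
    (horth : Aiᵀ * Ai = 1)
    -- each column of `Ai` is an eigenvector of `Φ` with eigenvalue `μ k`:
    (heig : ∀ k, Φ *ᵥ Aiᵀ k = μ k • Aiᵀ k)
    -- the `μ k` are the largest eigenvalues (with multiplicity): any eigenvalue
    -- of `Φ` whose eigenvector is orthogonal to all columns of `Ai` is at most
    -- every `μ k`:
    (hmax : ∀ (ν : ℝ) (v : Fin D → ℝ), v ≠ 0 → Φ *ᵥ v = ν • v →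
        (∀ k, v ⬝ᵥ Aiᵀ k = 0) → ∀ k, ν ≤ μ k)
    (Bi : Matrix (Fin P) (Fin D) ℝ)
    (hBi : Bi = (1 - lam * ((M : ℝ) - 1) / (M : ℝ))⁻¹ • (Aiᵀ * (1 - Z))) :
    ∀ (Ai' : Matrix (Fin D) (Fin P) ℝ) (Bi' : Matrix (Fin P) (Fin D) ℝ),
      maeErrorM lam (Function.update A i Ai) (Function.update B i Bi) X
        ≤ maeErrorM lam (Function.update A i Ai') (Function.update B i Bi') X := by
    classical
  intro Ai' Bi'
  -- scalar bookkeeping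
  have hM1 : (1:ℝ) ≤ (M:ℝ) - 1 := by
    have : (2:ℝ) ≤ (M:ℝ) := by exact_mod_cast hM
    linarith
  have hM0 : (0:ℝ) < (M:ℝ) := by linarith
  have hMne : (M:ℝ) ≠ 0 := ne_of_gt hM0
  set c : ℝ := 1 - lam * ((M:ℝ) - 1) / (M:ℝ) with hc
  have hc0 : 0 < c := by
    have h1 : lam * ((M:ℝ) - 1) < (M:ℝ) := by
      have := (lt_div_iff₀ (by linarith : (0:ℝ) < (M:ℝ) - 1)).mp hlam
      linarith
    rw [hc, sub_pos, div_lt_one hM0]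
    exact h1
  have hcne : c ≠ 0 := ne_of_gt hc0
  -- the fixed data
  set S₀ : Matrix (Fin D) (Fin N) ℝ := ∑ j ∈ Finset.univ.erase i, A j * B j * X with hS₀
  set W : Matrix (Fin D) (Fin N) ℝ := X - (lam/(M:ℝ)) • S₀ with hW
  have hW1Z : W = (1 - Z) * X := by
    rw [hW, Matrix.sub_mul, Matrix.one_mul, hZ, Matrix.smul_mul, Matrix.sum_mul]
  have hΦW : Φ = W * Wᵀ := by
    rw [hΦ, hW1Z, Matrix.transpose_mul]
    simp only [Matrix.mul_assoc]
  -- orthonormality of the columns in dot-product form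
  set a : Fin P → Fin D → ℝ := fun k => Aiᵀ k with hadef
  have ha : ∀ k l, a k ⬝ᵥ a l = if k = l then 1 else 0 := by
    intro k l
    have h1 : (Aiᵀ * Ai) k l = (1 : Matrix (Fin P) (Fin P) ℝ) k l := by rw [horth]
    rw [Matrix.mul_apply, Matrix.one_apply] at h1
    rw [← h1]
    rfl
  have heig' : ∀ k, (W * Wᵀ) *ᵥ a k = μ k • a k := by
    intro k; rw [← hΦW]; exact heig k
  have hmax' : ∀ (ν : ℝ) (v : Fin D → ℝ), v ≠ 0 → (W * Wᵀ) *ᵥ v = ν • v →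
      (∀ k, v ⬝ᵥ a k = 0) → ∀ k, ν ≤ μ k := by
    intro ν v hv hvv hva
    rw [← hΦW] at hvv
    exact hmax ν v hv hvv hva
  -- eigen relation in matrix form
  have hAeig : Φ * Ai = Ai * Matrix.diagonal μ := by
    ext d k
    have h1 := congrFun (heig k) d
    rw [Matrix.mul_apply, Matrix.mul_diagonal]
    rw [Matrix.mulVec, dotProduct] at h1
    simp only [Pi.smul_apply, smul_eq_mul] at h1
    rw [show ∑ j, Φ d j * Ai j k = μ k * Aiᵀ k d from by
      rw [← h1]; exact Finset.sum_congr rfl fun j _ => rfl]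
    rw [Matrix.transpose_apply, mul_comm]
  -- the uniform error formula
  have hform : ∀ (A' : Matrix (Fin D) (Fin P) ℝ) (B' : Matrix (Fin P) (Fin D) ℝ),
      maeErrorM lam (Function.update A i A') (Function.update B i B') X
        = (1/((N:ℝ)*(M:ℝ))) *
          ((∑ j ∈ Finset.univ.erase i,
              (frobSq (X - A j * B j * X) - lam * frobSq (A j * B j * X)))
            + frobSq X + (lam/(M:ℝ)) * frobSq S₀ - (1/c) * frobSq W
            + (1/c) * frobSq (c • (A' * B' * X) - W)) := by
    intro A' B'
    rw [maeErrorM]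
    congr 1
    have hgen := err_formula_general hMne lam c hc hcne i
      (fun m => Function.update A i A' m * Function.update B i B' m * X) X S₀ W
      (by
        rw [hS₀]
        refine Finset.sum_congr rfl fun j hj => ?_
        have hji := Finset.ne_of_mem_erase hj
        simp only [Function.update_of_ne hji]) hW
    have hE : ∑ j ∈ Finset.univ.erase i,
        (frobSq (X - Function.update A i A' j * Function.update B i B' j * X)
          - lam * frobSq (Function.update A i A' j * Function.update B i B' j * X))
        = ∑ j ∈ Finset.univ.erase i,
          (frobSq (X - A j * B j * X) - lam * frobSq (A j * B j * X)) := by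
      refine Finset.sum_congr rfl fun j hj => ?_
      have hji := Finset.ne_of_mem_erase hj
      rw [Function.update_of_ne hji, Function.update_of_ne hji]
    simp only [Function.update_self] at hgen
    rw [hE] at hgen
    exact hgen
  rw [hform Ai Bi, hform Ai' Bi']
  -- compare the variable parts
  have hmain : frobSq (c • (Ai * Bi * X) - W) ≤ frobSq (c • (Ai' * Bi' * X) - W) := by
    -- value at the eigen choice
    have hopt : c • (Ai * Bi * X) = Ai * Aiᵀ * W := by
      rw [hBi, hW1Z]
      rw [show Ai * (c⁻¹ • (Aiᵀ * (1-Z))) * X = c⁻¹ • (Ai * Aiᵀ * ((1-Z)*X)) from by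
        rw [Matrix.mul_smul, Matrix.smul_mul]
        simp only [Matrix.mul_assoc]]
      rw [smul_smul, mul_inv_cancel₀ hcne, one_smul]
    have hval : frobSq (c • (Ai * Bi * X) - W) = Matrix.trace (W * Wᵀ) - ∑ k, μ k := by
      rw [hopt]
      rw [frobSq_sub_expand]
      have e1 : frobSq (Ai * Aiᵀ * W) = ∑ k, μ k := by
        rw [frobSq]
        have : Ai * Aiᵀ * W * (Ai * Aiᵀ * W)ᵀ
            = Ai * Aiᵀ * (W * Wᵀ) * Ai * Aiᵀ := by
          rw [Matrix.transpose_mul, Matrix.transpose_mul, Matrix.transpose_transpose]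
          simp only [Matrix.mul_assoc]
        rw [this, ← hΦW]
        rw [show Ai * Aiᵀ * Φ * Ai * Aiᵀ = Ai * Aiᵀ * (Φ * Ai) * Aiᵀ from by
          simp only [Matrix.mul_assoc]]
        rw [hAeig]
        rw [show Ai * Aiᵀ * (Ai * Matrix.diagonal μ) * Aiᵀ
            = Ai * ((Aiᵀ * Ai) * Matrix.diagonal μ) * Aiᵀ from by
          simp only [Matrix.mul_assoc]]
        rw [horth, Matrix.one_mul]
        rw [Matrix.trace_mul_comm, show Aiᵀ * (Ai * Matrix.diagonal μ)
            = (Aiᵀ * Ai) * Matrix.diagonal μ from by simp only [Matrix.mul_assoc]]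
        rw [horth, Matrix.one_mul, Matrix.trace_diagonal]
      have e2 : ipm (Ai * Aiᵀ * W) W = ∑ k, μ k := by
        rw [ipm]
        rw [show Ai * Aiᵀ * W * Wᵀ = Ai * (Aiᵀ * (W * Wᵀ)) from by
          simp only [Matrix.mul_assoc]]
        rw [Matrix.trace_mul_comm]
        rw [show Aiᵀ * (W * Wᵀ) * Ai = Aiᵀ * ((W * Wᵀ) * Ai) from by
          simp only [Matrix.mul_assoc]]
        rw [← hΦW, hAeig]
        rw [show Aiᵀ * (Ai * Matrix.diagonal μ) = (Aiᵀ * Ai) * Matrix.diagonal μ from by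
          simp only [Matrix.mul_assoc]]
        rw [horth, Matrix.one_mul, Matrix.trace_diagonal]
      rw [e1, e2, frobSq]
      ring
    have hlow : Matrix.trace (W * Wᵀ) - ∑ k, μ k
        ≤ frobSq (c • (Ai' * Bi' * X) - W) := by
      have hrw : c • (Ai' * Bi' * X) = Ai' * (c • (Bi' * X)) := by
        rw [Matrix.mul_smul, Matrix.mul_assoc]
      rw [hrw]
      exact eckart_lower W a μ ha heig' hmax' Ai' (c • (Bi' * X))
    rw [hval]
    exact hlow
  have hNM : (0:ℝ) ≤ 1/((N:ℝ)*(M:ℝ)) := by positivity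
  have hcinv : (0:ℝ) ≤ 1/c := by positivity
  have h2 : (1/c) * frobSq (c • (Ai * Bi * X) - W)
      ≤ (1/c) * frobSq (c • (Ai' * Bi' * X) - W) :=
    mul_le_mul_of_nonneg_left hmain hcinv
  apply mul_le_mul_of_nonneg_left _ hNM
  linarith
end

section
/- Let X and Y be D×N real matrices with X Xᵀ invertible, and define Σ := (Y Xᵀ)(X Xᵀ)^{−1}(X Yᵀ). Let U ∈ ℝ^{D×P} be a matrix whose P columns are orthonormal eigenvectors of the symmetric matrix Σ corresponding to its P largest eigenvalues (counted with multiplicity). Then the pair A := U, B := Uᵀ(Y Xᵀ)(X Xᵀ)^{−1} minimises E(A, B) := ‖Y − A B X‖² over all pairs (A, B) ∈ ℝ^{D×P} × ℝ^{P×D}, where ‖·‖ denotes the Frobenius norm. -/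
open Finset Matrix
open scoped RealInnerProductSpace

lemma frobSq_nonneg {m n : ℕ} (A : Matrix (Fin m) (Fin n) ℝ) : 0 ≤ frobSq A := by
  unfold frobSq
  rw [Matrix.trace]
  refine Finset.sum_nonneg fun i _ => ?_
  rw [Matrix.diag_apply, Matrix.mul_apply]
  refine Finset.sum_nonneg fun j _ => ?_
  simp [mul_self_nonneg]

lemma frobSq_neg {m n : ℕ} (A : Matrix (Fin m) (Fin n) ℝ) : frobSq (-A) = frobSq A := by
  unfold frobSq; simp

lemma frobSq_sub_expand_s14 {m n : ℕ} (A B : Matrix (Fin m) (Fin n) ℝ) :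
    frobSq (A - B) = frobSq A - trace (A * Bᵀ) - trace (B * Aᵀ) + frobSq B := by
  unfold frobSq
  rw [Matrix.transpose_sub, Matrix.sub_mul, Matrix.mul_sub, Matrix.mul_sub,
    Matrix.trace_sub, Matrix.trace_sub, Matrix.trace_sub]
  ring

lemma loss_decomp {D N : ℕ} (X Y : Matrix (Fin D) (Fin N) ℝ)
    (M W T S Sig : Matrix (Fin D) (Fin D) ℝ)
    (hS : S = X * Xᵀ) (hTT : T * Tᵀ = S) (hWS : W * S = Y * Xᵀ)
    (hSWt : S * Wᵀ = X * Yᵀ) (hSig : W * S * Wᵀ = Sig) :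
    frobSq (Y - M * X) = frobSq ((M - W) * T) + (frobSq Y - trace Sig) := by
  have h1 : frobSq (M * X) = trace (M * S * Mᵀ) := by
    unfold frobSq; rw [hS]; simp only [transpose_mul, Matrix.mul_assoc]
  have h2 : frobSq (M * T) = trace (M * S * Mᵀ) := by
    unfold frobSq; rw [← hTT]; simp only [transpose_mul, Matrix.mul_assoc]
  have h3 : frobSq (W * T) = trace Sig := by
    unfold frobSq; rw [← hSig, ← hTT]; simp only [transpose_mul, Matrix.mul_assoc]
  have h4 : M * T * (W * T)ᵀ = M * (X * Yᵀ) := by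
    rw [← hSWt, ← hTT]; simp only [transpose_mul, Matrix.mul_assoc]
  have h5 : W * T * (M * T)ᵀ = (Y * Xᵀ) * Mᵀ := by
    rw [← hWS, ← hTT]; simp only [transpose_mul, Matrix.mul_assoc]
  have h6 : Y * (M * X)ᵀ = Y * Xᵀ * Mᵀ := by
    simp only [transpose_mul, Matrix.mul_assoc]
  have h7 : M * X * Yᵀ = M * (X * Yᵀ) := by rw [Matrix.mul_assoc]
  rw [frobSq_sub_expand_s14 Y (M * X), Matrix.sub_mul, frobSq_sub_expand_s14 (M * T) (W * T),
    h1, h2, h3, h4, h5, h6, h7, trace_mul_comm (Y * Xᵀ) Mᵀ, trace_mul_comm M (X * Yᵀ)]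
  ring

lemma candidate_value {D P : ℕ} (U : Matrix (Fin D) (Fin P) ℝ) (μ : Fin P → ℝ)
    (W T S Sig : Matrix (Fin D) (Fin D) ℝ)
    (horth : Uᵀ * U = 1) (hTT : T * Tᵀ = S) (hWSWt : W * S * Wᵀ = Sig)
    (heig : ∀ k, Sig *ᵥ Uᵀ k = μ k • Uᵀ k) :
    frobSq ((U * Uᵀ * W - W) * T) = trace Sig - ∑ k, μ k := by
  set J := U * Uᵀ with hJdef
  have hJt : Jᵀ = J := by rw [hJdef, transpose_mul, transpose_transpose]
  have hJJ : J * J = J := by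
    rw [hJdef, Matrix.mul_assoc, ← Matrix.mul_assoc Uᵀ U Uᵀ, horth, Matrix.one_mul]
  have hfr : frobSq ((J * W - W) * T) = trace ((J - 1) * Sig * (J - 1)) := by
    have : J * W - W = (J - 1) * W := by rw [Matrix.sub_mul, Matrix.one_mul]
    rw [this]
    unfold frobSq
    rw [← hWSWt, ← hTT]
    simp only [transpose_mul, transpose_sub, transpose_one, transpose_transpose, hJt,
      Matrix.mul_assoc]
  have hexp : trace ((J - 1) * Sig * (J - 1)) = trace Sig - trace (Uᵀ * Sig * U) := by
    have e1 : (J - 1) * Sig * (J - 1)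
        = J * Sig * J - J * Sig - Sig * J + Sig := by
      noncomm_ring
    have e2 : trace (J * Sig * J) = trace (J * Sig) := by
      rw [trace_mul_comm (J * Sig) J, ← Matrix.mul_assoc, hJJ]
    have e3 : trace (Sig * J) = trace (J * Sig) := trace_mul_comm _ _
    have e4 : trace (J * Sig) = trace (Uᵀ * Sig * U) := by
      rw [hJdef, Matrix.mul_assoc, trace_mul_comm U (Uᵀ * Sig), Matrix.mul_assoc]
    rw [e1, trace_add, trace_sub, trace_sub, e2, e3, e4]
    ring
  have hUSU : trace (Uᵀ * Sig * U) = ∑ k, μ k := by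
    rw [Matrix.trace]
    refine Finset.sum_congr rfl fun k _ => ?_
    have : (Uᵀ * (Sig * U)) k k = Uᵀ k ⬝ᵥ (Sig *ᵥ Uᵀ k) := by
      simp [Matrix.mul_apply, dotProduct, Matrix.mulVec]
    rw [Matrix.diag_apply, Matrix.mul_assoc, this, heig k, dotProduct_smul]
    have : Uᵀ k ⬝ᵥ Uᵀ k = (1 : Matrix (Fin P) (Fin P) ℝ) k k := by
      rw [← horth]; simp [Matrix.mul_apply, dotProduct]
    rw [smul_eq_mul, this, Matrix.one_apply_eq, mul_one]
  rw [hfr, hexp, hUSU]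

lemma proj_lower_s14 {D : ℕ} (Pi R G : Matrix (Fin D) (Fin D) ℝ)
    (hsym : Piᵀ = Pi) (hidem : Pi * Pi = Pi) (hR : Pi * R = R) :
    frobSq ((1 - Pi) * G) ≤ frobSq (R - G) := by
  set Q := (1 : Matrix (Fin D) (Fin D) ℝ) - Pi with hQdef
  have hQt : Qᵀ = Q := by rw [hQdef, transpose_sub, transpose_one, hsym]
  have hQQ : Q * Q = Q := by
    rw [hQdef, Matrix.sub_mul, Matrix.mul_sub, Matrix.mul_sub, hidem]
    simp only [Matrix.one_mul, Matrix.mul_one]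
    abel
  have hpyth : ∀ M : Matrix (Fin D) (Fin D) ℝ,
      frobSq M = frobSq (Pi * M) + frobSq (Q * M) := by
    intro M
    unfold frobSq
    have c1 : trace (Pi * M * (Pi * M)ᵀ) = trace (Pi * (M * Mᵀ)) := by
      rw [transpose_mul, hsym]
      simp only [← Matrix.mul_assoc]
      rw [trace_mul_comm _ Pi]
      simp only [← Matrix.mul_assoc]
      rw [hidem, Matrix.mul_assoc]
    have c2 : trace (Q * M * (Q * M)ᵀ) = trace (Q * (M * Mᵀ)) := by
      rw [transpose_mul, hQt]
      simp only [← Matrix.mul_assoc]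
      rw [trace_mul_comm _ Q]
      simp only [← Matrix.mul_assoc]
      rw [hQQ, Matrix.mul_assoc]
    rw [c1, c2, ← trace_add, ← Matrix.add_mul]
    have : Pi + Q = 1 := by rw [hQdef]; abel
    rw [this, Matrix.one_mul]
  have hQRG : Q * (R - G) = -(Q * G) := by
    rw [Matrix.mul_sub, hQdef, Matrix.sub_mul, Matrix.one_mul, hR]
    abel
  calc frobSq (Q * G) = frobSq (Q * (R - G)) := by rw [hQRG, frobSq_neg]
    _ ≤ frobSq (Pi * (R - G)) + frobSq (Q * (R - G)) :=
        le_add_of_nonneg_left (frobSq_nonneg _)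
    _ = frobSq (R - G) := (hpyth _).symm

lemma kyfan_arith {P q : ℕ} (μ : Fin P → ℝ) (ν : Fin q → ℝ) (t : Fin P ⊕ Fin q → ℝ)
    (hμ0 : ∀ k, 0 ≤ μ k) (hν : ∀ j k, ν j ≤ μ k)
    (ht0 : ∀ α, 0 ≤ t α) (ht1 : ∀ α, t α ≤ 1) (htsum : ∑ α, t α ≤ (P : ℝ)) :
    ∑ α, (Sum.elim μ ν α) * t α ≤ ∑ k, μ k := by
  rcases Nat.eq_zero_or_pos P with hP | hP
  · subst hP
    have hz : ∀ α, t α = 0 := by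
      have h0 : ∑ α, t α = 0 :=
        le_antisymm (by simpa using htsum) (Finset.sum_nonneg fun α _ => ht0 α)
      intro α
      have := (Finset.sum_eq_zero_iff_of_nonneg (fun α _ => ht0 α)).1 h0
      exact this α (Finset.mem_univ α)
    simp [hz]
  · obtain ⟨k₀, -, hk₀⟩ := Finset.exists_min_image Finset.univ μ
      ⟨⟨0, hP⟩, Finset.mem_univ _⟩
    set m := μ k₀ with hm
    have hm0 : 0 ≤ m := hμ0 k₀
    have hmle : ∀ k, m ≤ μ k := fun k => hk₀ k (Finset.mem_univ k)
    have hsplit : ∑ α, t α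
        = ∑ k, t (Sum.inl k) + ∑ j, t (Sum.inr j) := Fintype.sum_sum_type t
    calc ∑ α, (Sum.elim μ ν α) * t α
        = ∑ k, μ k * t (Sum.inl k) + ∑ j, ν j * t (Sum.inr j) :=
          Fintype.sum_sum_type _
      _ ≤ ∑ k, μ k * t (Sum.inl k) + ∑ j, m * t (Sum.inr j) := by
          exact add_le_add_right (Finset.sum_le_sum fun j _ =>
            mul_le_mul_of_nonneg_right (hν j k₀) (ht0 _)) _
      _ = ∑ k, μ k * t (Sum.inl k) + m * ∑ j, t (Sum.inr j) := by
          rw [Finset.mul_sum]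
      _ ≤ ∑ k, μ k * t (Sum.inl k) + m * ((P : ℝ) - ∑ k, t (Sum.inl k)) := by
          gcongr
          have : ∑ j, t (Sum.inr j) = ∑ α, t α - ∑ k, t (Sum.inl k) := by
            rw [hsplit]; ring
          rw [this]; linarith
      _ = ∑ k, (μ k * t (Sum.inl k) + m * (1 - t (Sum.inl k))) := by
          rw [Finset.sum_add_distrib]
          congr 1
          rw [← Finset.mul_sum, Finset.sum_sub_distrib]
          simp [Finset.card_univ]
      _ ≤ ∑ k, μ k := by
          refine Finset.sum_le_sum fun k _ => ?_
          nlinarith [ht1 (Sum.inl k), ht0 (Sum.inl k), hmle k, hμ0 k]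

lemma kyFan {D P r : ℕ} (Sig : Matrix (Fin D) (Fin D) ℝ) (hherm : Sigᵀ = Sig)
    (U : Matrix (Fin D) (Fin P) ℝ) (μ : Fin P → ℝ) (hμ0 : ∀ k, 0 ≤ μ k)
    (horth : Uᵀ * U = 1)
    (heig : ∀ k, Sig *ᵥ Uᵀ k = μ k • Uᵀ k)
    (hmax : ∀ (ν : ℝ) (v : Fin D → ℝ), v ≠ 0 → Sig *ᵥ v = ν • v →
        (∀ k, v ⬝ᵥ Uᵀ k = 0) → ∀ k, ν ≤ μ k)
    (hr : r ≤ P) (V : Matrix (Fin D) (Fin r) ℝ) (hV : Vᵀ * V = 1) :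
    trace (Vᵀ * Sig * V) ≤ ∑ k, μ k := by
  classical
  set E := EuclideanSpace ℝ (Fin D) with hEdef
  let tv : E → (Fin D → ℝ) := fun x => x
  have hinner : ∀ x y : E, ⟪x, y⟫ = tv x ⬝ᵥ tv y := by
    intro x y
    rw [PiLp.inner_apply]
    simp [tv, dotProduct, RCLike.inner_apply, starRingEnd_apply, star_trivial, mul_comm]
  let u : Fin P → E := fun k => WithLp.toLp 2 (Uᵀ k)
  have hudot : ∀ k l, Uᵀ k ⬝ᵥ Uᵀ l = if k = l then (1 : ℝ) else 0 := by
    intro k l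
    have := congrFun (congrFun horth k) l
    simpa [Matrix.mul_apply, dotProduct, Matrix.one_apply] using this
  have hu_on : Orthonormal ℝ u := by
    rw [orthonormal_iff_ite]
    intro k l
    rw [hinner]
    exact hudot k l
  have hfinE : Module.finrank ℝ E = D := finrank_euclideanSpace_fin
  have hPD : P ≤ D := by
    have := hu_on.linearIndependent.fintype_card_le_finrank
    simpa [hfinE] using this
  set Esub : Submodule ℝ E := Submodule.span ℝ (Set.range u) with hEsub
  set F : Submodule ℝ E := Esubᗮ with hFdef
  have hEfin : Module.finrank ℝ Esub = P := by
    rw [hEsub, finrank_span_eq_card hu_on.linearIndependent, Fintype.card_fin]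
  have hFfin : Module.finrank ℝ F = D - P := by
    have h := Submodule.finrank_add_finrank_orthogonal (K := Esub)
    rw [hEfin, hfinE] at h
    rw [hFdef]
    omega
  set Lop : E →ₗ[ℝ] E := Matrix.toEuclideanLin Sig with hLop
  have hLop_apply : ∀ x : E, tv (Lop x) = Sig *ᵥ tv x := fun x => rfl
  have hsymLop : Lop.IsSymmetric := by
    intro x y
    rw [hinner, hinner, hLop_apply]
    show (Sig *ᵥ tv x) ⬝ᵥ (tv y) = (tv x) ⬝ᵥ (Sig *ᵥ tv y)
    rw [dotProduct_mulVec]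
    congr 1
    rw [← Matrix.vecMul_transpose, hherm]
  have hu_eig : ∀ k, Lop (u k) = μ k • u k := fun k => congrArg (WithLp.toLp 2) (heig k)
  have hFinv : ∀ x ∈ F, Lop x ∈ F := by
    intro x hx
    rw [hFdef, Submodule.mem_orthogonal]
    intro y hy
    rw [hEsub, Submodule.mem_span_range_iff_exists_fun] at hy
    obtain ⟨c, rfl⟩ := hy
    rw [sum_inner]
    refine Finset.sum_eq_zero fun k _ => ?_
    rw [real_inner_smul_left]
    have : ⟪u k, Lop x⟫ = 0 := by
      rw [← hsymLop (u k) x, hu_eig k, real_inner_smul_left,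
        Submodule.inner_right_of_mem_orthogonal (Submodule.subset_span (Set.mem_range_self k)) hx,
        mul_zero]
    rw [this, mul_zero]
  set Trest := Lop.restrict hFinv with hTrest
  have hTsym : Trest.IsSymmetric := hsymLop.restrict_invariant hFinv
  set bF := hTsym.eigenvectorBasis hFfin with hbF
  set ν := hTsym.eigenvalues hFfin with hν
  let w : Fin (D - P) → E := fun j => (bF j : E)
  have hw_eig : ∀ j, Lop (w j) = ν j • w j := by
    intro j
    have h := congrArg Subtype.val (hTsym.apply_eigenvectorBasis hFfin j)
    rwa [LinearMap.restrict_coe_apply, Submodule.coe_smul] at h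
  have hw_ne : ∀ j, w j ≠ 0 := by
    intro j hj
    have : bF j = 0 := Subtype.ext hj
    exact (bF.toBasis.ne_zero j) (by simpa using this)
  have hw_orthU : ∀ j k, tv (w j) ⬝ᵥ Uᵀ k = 0 := by
    intro j k
    have h : ⟪w j, u k⟫ = 0 :=
      Submodule.inner_left_of_mem_orthogonal (Submodule.subset_span (Set.mem_range_self k)) (bF j).2
    rw [hinner] at h
    exact h
  have hν_le : ∀ j k, ν j ≤ μ k := by
    intro j k
    exact hmax (ν j) (tv (w j)) ((WithLp.ofLp_eq_zero 2).ne.2 (hw_ne j)) (congrArg tv (hw_eig j))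
      (fun k' => hw_orthU j k') k
  -- combined orthonormal eigenbasis
  let e : Fin P ⊕ Fin (D - P) → E := Sum.elim u w
  have he_on : Orthonormal ℝ e := by
    rw [orthonormal_iff_ite]
    rintro (k | i) (l | j)
    · show ⟪u k, u l⟫ = _
      rw [hinner]
      simpa using hudot k l
    · have h : ⟪u k, w j⟫ = 0 :=
        Submodule.inner_right_of_mem_orthogonal (Submodule.subset_span (Set.mem_range_self k)) (bF j).2
      show ⟪u k, w j⟫ = _
      simpa using h
    · have h : ⟪w i, u l⟫ = 0 :=
        Submodule.inner_left_of_mem_orthogonal (Submodule.subset_span (Set.mem_range_self l)) (bF i).2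
      show ⟪w i, u l⟫ = _
      simpa using h
    · have hb := bF.orthonormal
      rw [orthonormal_iff_ite] at hb
      have h := hb i j
      rw [Submodule.coe_inner] at h
      show ⟪w i, w j⟫ = _
      simpa [w, Sum.inr.injEq] using h
  have hcard : Fintype.card (Fin P ⊕ Fin (D - P)) = Module.finrank ℝ E := by
    simp only [Fintype.card_sum, Fintype.card_fin, hfinE]
    omega
  have hspan : Submodule.span ℝ (Set.range e) = ⊤ :=
    he_on.linearIndependent.span_eq_top_of_card_eq_finrank' hcard
  let B : OrthonormalBasis (Fin P ⊕ Fin (D - P)) ℝ E := OrthonormalBasis.mk he_on hspan.ge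
  have hBe : ∀ α, B α = e α := fun α => by simp [B]
  let lam : Fin P ⊕ Fin (D - P) → ℝ := Sum.elim μ ν
  have he_eig : ∀ α, Lop (e α) = lam α • e α := by
    rintro (k | j)
    · exact hu_eig k
    · exact hw_eig j
  -- columns of V
  let v : Fin r → E := fun i => WithLp.toLp 2 (Vᵀ i)
  have hvdot : ∀ i i', Vᵀ i ⬝ᵥ Vᵀ i' = if i = i' then (1 : ℝ) else 0 := by
    intro i i'
    have := congrFun (congrFun hV i) i'
    simpa [Matrix.mul_apply, dotProduct, Matrix.one_apply] using this
  have hv_on : Orthonormal ℝ v := by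
    rw [orthonormal_iff_ite]
    intro i i'
    rw [hinner]
    exact hvdot i i'
  have hquad : ∀ x : E, ⟪x, Lop x⟫ = ∑ α, lam α * ⟪e α, x⟫ ^ 2 := by
    intro x
    rw [← B.sum_inner_mul_inner x (Lop x)]
    refine Finset.sum_congr rfl fun α _ => ?_
    rw [hBe]
    have h1 : ⟪e α, Lop x⟫ = lam α * ⟪e α, x⟫ := by
      rw [← hsymLop (e α) x, he_eig α, real_inner_smul_left]
    rw [h1, real_inner_comm x (e α)]
    ring
  have htr : trace (Vᵀ * Sig * V) = ∑ i, ⟪v i, Lop (v i)⟫ := by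
    rw [Matrix.trace]
    refine Finset.sum_congr rfl fun i _ => ?_
    rw [Matrix.diag_apply, Matrix.mul_assoc]
    have hent : (Vᵀ * (Sig * V)) i i = Vᵀ i ⬝ᵥ (Sig *ᵥ Vᵀ i) := by
      simp [Matrix.mul_apply, dotProduct, Matrix.mulVec]
    rw [hent, hinner]
    rfl
  have ht0 : ∀ α, 0 ≤ ∑ i, ⟪e α, v i⟫ ^ 2 :=
    fun α => Finset.sum_nonneg fun i _ => sq_nonneg _
  have ht_le : ∀ α, (∑ i, ⟪e α, v i⟫ ^ 2) ≤ 1 := by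
    intro α
    have hb := hv_on.sum_inner_products_le (e α) (s := Finset.univ)
    have hn : ‖e α‖ = 1 := he_on.1 α
    rw [hn] at hb
    calc ∑ i, ⟪e α, v i⟫ ^ 2 = ∑ i, ‖⟪v i, e α⟫‖ ^ 2 := by
          refine Finset.sum_congr rfl fun i _ => ?_
          rw [real_inner_comm (e α) (v i), Real.norm_eq_abs, sq_abs]
      _ ≤ 1 := by simpa using hb
  have hparseval : ∀ i, ∑ α, ⟪e α, v i⟫ ^ 2 = 1 := by
    intro i
    have h := B.sum_inner_mul_inner (v i) (v i)
    have hvv : ⟪v i, v i⟫ = 1 := by rw [hinner]; simpa using hvdot i i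
    rw [hvv] at h
    rw [← h]
    refine Finset.sum_congr rfl fun α _ => ?_
    rw [hBe, real_inner_comm (e α) (v i)]
    ring
  have htsum : ∑ α, ∑ i, ⟪e α, v i⟫ ^ 2 ≤ (P : ℝ) := by
    rw [Finset.sum_comm]
    calc ∑ i : Fin r, ∑ α, ⟪e α, v i⟫ ^ 2 = ∑ i : Fin r, (1 : ℝ) := by
          exact Finset.sum_congr rfl fun i _ => hparseval i
      _ = (r : ℝ) := by simp
      _ ≤ (P : ℝ) := by exact_mod_cast hr
  have hfinal := kyfan_arith μ ν (fun α => ∑ i, ⟪e α, v i⟫ ^ 2) hμ0 hν_le ht0 ht_le htsum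
  rw [htr]
  calc ∑ i, ⟪v i, Lop (v i)⟫ = ∑ α, lam α * ∑ i, ⟪e α, v i⟫ ^ 2 := by
        simp_rw [hquad]
        rw [Finset.sum_comm]
        exact Finset.sum_congr rfl fun α _ => by rw [Finset.mul_sum]
    _ ≤ ∑ k, μ k := hfinal


lemma resid_value {D r : ℕ} (V : Matrix (Fin D) (Fin r) ℝ) (G Sig : Matrix (Fin D) (Fin D) ℝ)
    (hVV : Vᵀ * V = 1) (hGG : G * Gᵀ = Sig) :
    frobSq ((1 - V * Vᵀ) * G) = trace Sig - trace (Vᵀ * Sig * V) := by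
  set Q := (1 : Matrix (Fin D) (Fin D) ℝ) - V * Vᵀ with hQdef
  have hQt : Qᵀ = Q := by
    rw [hQdef, transpose_sub, transpose_one, transpose_mul, transpose_transpose]
  have hQQ : Q * Q = Q := by
    rw [hQdef]
    have : V * Vᵀ * (V * Vᵀ) = V * Vᵀ := by
      rw [Matrix.mul_assoc, ← Matrix.mul_assoc Vᵀ V Vᵀ, hVV, Matrix.one_mul]
    rw [Matrix.sub_mul, Matrix.mul_sub, Matrix.mul_sub, this]
    noncomm_ring
  have h1 : frobSq (Q * G) = trace (Q * (G * Gᵀ)) := by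
    unfold frobSq
    rw [transpose_mul, hQt]
    simp only [← Matrix.mul_assoc]
    rw [trace_mul_comm _ Q]
    simp only [← Matrix.mul_assoc]
    rw [hQQ, Matrix.mul_assoc]
  rw [h1, hGG, hQdef, Matrix.sub_mul, Matrix.one_mul, trace_sub,
    Matrix.mul_assoc, trace_mul_comm V (Vᵀ * Sig)]

lemma exists_proj {D P : ℕ} (A' : Matrix (Fin D) (Fin P) ℝ) :
    ∃ (r : ℕ) (V : Matrix (Fin D) (Fin r) ℝ), r ≤ P ∧ Vᵀ * V = 1 ∧
      ∀ (B : Matrix (Fin P) (Fin D) ℝ), (V * Vᵀ) * (A' * B) = A' * B := by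
  classical
  set E := EuclideanSpace ℝ (Fin D) with hEdef
  let colA : Fin P → E := fun p => WithLp.toLp 2 (A'ᵀ p)
  set Wsub : Submodule ℝ E := Submodule.span ℝ (Set.range colA) with hWsub
  set r := Module.finrank ℝ Wsub with hrdef
  have hr : r ≤ P := by
    have h := finrank_range_le_card (R := ℝ) colA
    rw [Set.finrank] at h
    simpa [hrdef, hWsub] using h
  let bW := stdOrthonormalBasis ℝ Wsub
  let v : Fin r → E := fun i => (bW i : E)
  let V : Matrix (Fin D) (Fin r) ℝ := Matrix.of fun d i => v i d
  have hinner : ∀ x y : E, ⟪x, y⟫ = (fun i => x i) ⬝ᵥ (fun i => y i) := by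
    intro x y
    rw [PiLp.inner_apply]
    simp [dotProduct, RCLike.inner_apply, starRingEnd_apply, star_trivial, mul_comm]
  have hvdot : ∀ i i', v i ⬝ᵥ v i' = if i = i' then (1 : ℝ) else 0 := by
    intro i i'
    have hon := bW.orthonormal
    rw [orthonormal_iff_ite] at hon
    have h := hon i i'
    rw [Submodule.coe_inner, hinner] at h
    exact h
  have hVV : Vᵀ * V = 1 := by
    ext i i'
    rw [Matrix.mul_apply, Matrix.one_apply]
    simpa [V, dotProduct] using hvdot i i'
  refine ⟨r, V, hr, hVV, ?_⟩
  have happ : ∀ (g : Fin r → E) (d : Fin D), (∑ i, g i) d = ∑ i, g i d :=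
    fun g d => by rw [WithLp.ofLp_sum, Finset.sum_apply]
  have happP : ∀ (g : Fin P → E) (d : Fin D), (∑ i, g i) d = ∑ i, g i d :=
    fun g d => by rw [WithLp.ofLp_sum, Finset.sum_apply]
  have hspanv : Submodule.span ℝ (Set.range v) = Wsub := by
    have h1 : Set.range v = Subtype.val '' Set.range (⇑bW) := by
      rw [← Set.range_comp]; rfl
    have h2 : Submodule.span ℝ (Set.range ⇑bW) = ⊤ := by
      rw [← bW.coe_toBasis]; exact bW.toBasis.span_eq
    rw [h1, ← Submodule.coe_subtype, Submodule.span_image, h2, Submodule.map_top,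
      Submodule.range_subtype]
  have hfixi : ∀ i0, (V * Vᵀ) *ᵥ (fun d => v i0 d) = fun d => v i0 d := by
    intro i0
    have hstep : Vᵀ *ᵥ (fun d => v i0 d) = fun i => (1 : Matrix (Fin r) (Fin r) ℝ) i i0 := by
      funext i
      have : (Vᵀ *ᵥ fun d => v i0 d) i = (Vᵀ * V) i i0 := by
        simp [Matrix.mulVec, Matrix.mul_apply, dotProduct, V]
      rw [this, hVV]
    rw [← Matrix.mulVec_mulVec, hstep]
    funext d
    simp [Matrix.mulVec, dotProduct, Matrix.one_apply, V]
  have hfix : ∀ x : E, x ∈ Wsub → (V * Vᵀ) *ᵥ (fun d => x d) = fun d => x d := by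
    intro x hx
    rw [← hspanv, Submodule.mem_span_range_iff_exists_fun] at hx
    obtain ⟨c, hc⟩ := hx
    have hxd : (fun d => x d) = ∑ i, c i • (fun d => v i d) := by
      funext d
      rw [Finset.sum_apply]
      have h1 : x d = (∑ i, c i • v i) d := by rw [hc]
      rw [h1, happ]
      rfl
    rw [hxd]
    calc (V * Vᵀ) *ᵥ (∑ i, c i • (fun d => v i d))
        = ∑ i, c i • ((V * Vᵀ) *ᵥ (fun d => v i d)) := by
          rw [show (V * Vᵀ) *ᵥ (∑ i, c i • (fun d => v i d))
              = (V * Vᵀ).mulVecLin (∑ i, c i • (fun d => v i d)) from rfl, map_sum]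
          exact Finset.sum_congr rfl fun i _ => by rw [LinearMap.map_smul]; rfl
      _ = ∑ i, c i • (fun d => v i d) := Finset.sum_congr rfl fun i _ => by rw [hfixi i]
  intro B
  ext d j
  have hcol : ∀ (M N : Matrix (Fin D) (Fin D) ℝ),
      (M * N) d j = (M *ᵥ fun d' => N d' j) d := by
    intro M N
    simp [Matrix.mul_apply, Matrix.mulVec, dotProduct]
  have hexp : (show E from WithLp.toLp 2 (fun d' => (A' * B) d' j)) = ∑ p, B p j • colA p := by
    ext d'
    rw [happP (fun p => B p j • colA p) d']
    show ∑ p, A' d' p * B p j = _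
    exact Finset.sum_congr rfl fun p _ => by
      show A' d' p * B p j = B p j * A' d' p
      ring
  have hmem : (show E from WithLp.toLp 2 (fun d' => (A' * B) d' j)) ∈ Wsub := by
    rw [hexp]
    exact Submodule.sum_mem _ fun p _ =>
      Submodule.smul_mem _ _ (Submodule.subset_span (Set.mem_range_self p))
  have h2 := hfix _ hmem
  calc (V * Vᵀ * (A' * B)) d j = ((V * Vᵀ) *ᵥ fun d' => (A' * B) d' j) d := hcol _ _
    _ = (A' * B) d j := by
        rw [show ((V * Vᵀ) *ᵥ fun d' => (A' * B) d' j) = fun d' => (A' * B) d' j from h2]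

open scoped MatrixOrder in
lemma exists_sqrt_psd {D : ℕ} {S : Matrix (Fin D) (Fin D) ℝ} (h : S.PosSemidef) :
    ∃ T : Matrix (Fin D) (Fin D) ℝ, Tᵀ = T ∧ T * T = S := by
  refine ⟨CFC.sqrt S, ?_, CFC.sqrt_mul_sqrt_self S h.nonneg⟩
  rw [← Matrix.conjTranspose_eq_transpose_of_trivial]
  exact (CFC.sqrt_nonneg S).posSemidef.1

/-- rank-restricted linear regression, Baldi–Hornik: with `XXᵀ`
invertible and `Σ = (YXᵀ)(XXᵀ)⁻¹(XYᵀ)`, if the columns of `U` are orthonormal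
eigenvectors of `Σ` for its `P` largest eigenvalues, then `A = U`,
`B = Uᵀ(YXᵀ)(XXᵀ)⁻¹` minimises `‖Y − ABX‖²` over all `(A, B)`. -/
theorem rank_restricted_linear_regression {D N P : ℕ}
    (X Y : Matrix (Fin D) (Fin N) ℝ) (hX : IsUnit (X * Xᵀ))
    (U : Matrix (Fin D) (Fin P) ℝ) (μ : Fin P → ℝ)
    -- the columns of `U` are orthonormal:
    (horth : Uᵀ * U = 1)
    -- each column of `U` is an eigenvector of `Σ` with eigenvalue `μ k`:
    (heig : ∀ k, ((Y * Xᵀ) * (X * Xᵀ)⁻¹ * (X * Yᵀ)) *ᵥ Uᵀ k = μ k • Uᵀ k)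
    -- the `μ k` are the largest eigenvalues (with multiplicity): any eigenvalue
    -- of `Σ` whose eigenvector is orthogonal to all columns of `U` is at most
    -- every `μ k`:
    (hmax : ∀ (ν : ℝ) (v : Fin D → ℝ), v ≠ 0 →
        ((Y * Xᵀ) * (X * Xᵀ)⁻¹ * (X * Yᵀ)) *ᵥ v = ν • v →
        (∀ k, v ⬝ᵥ Uᵀ k = 0) → ∀ k, ν ≤ μ k) :
    ∀ (A' : Matrix (Fin D) (Fin P) ℝ) (B' : Matrix (Fin P) (Fin D) ℝ),
      frobSq (Y - U * (Uᵀ * (Y * Xᵀ) * (X * Xᵀ)⁻¹) * X)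
        ≤ frobSq (Y - A' * B' * X) := by
  intro A' B'
  classical
  have hdet : IsUnit (X * Xᵀ).det := (Matrix.isUnit_iff_isUnit_det _).1 hX
  set S : Matrix (Fin D) (Fin D) ℝ := X * Xᵀ with hSdef
  set C : Matrix (Fin D) (Fin D) ℝ := Y * Xᵀ with hCdef
  set Ct : Matrix (Fin D) (Fin D) ℝ := X * Yᵀ with hCtdef
  have hCt : Cᵀ = Ct := by rw [hCdef, hCtdef, transpose_mul, transpose_transpose]
  set Sig : Matrix (Fin D) (Fin D) ℝ := C * S⁻¹ * Ct with hSigdef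
  have hSpsd : S.PosSemidef := by
    rw [hSdef, ← Matrix.conjTranspose_eq_transpose_of_trivial]
    exact Matrix.posSemidef_self_mul_conjTranspose X
  have hSmulinj : ∀ x : Fin D → ℝ, S *ᵥ x = 0 → x = 0 := by
    intro x hx
    have h1 : S⁻¹ *ᵥ (S *ᵥ x) = x := by
      rw [Matrix.mulVec_mulVec, Matrix.nonsing_inv_mul S hdet, Matrix.one_mulVec]
    rw [hx, Matrix.mulVec_zero] at h1
    exact h1.symm
  have hSpd : S.PosDef := by
    refine posDef_iff_dotProduct_mulVec.2 ⟨hSpsd.1, fun x hx => ?_⟩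
    have h0 : 0 ≤ star x ⬝ᵥ S *ᵥ x := hSpsd.dotProduct_mulVec_nonneg x
    have hne : star x ⬝ᵥ S *ᵥ x ≠ 0 := by
      intro h
      exact hx (hSmulinj x ((hSpsd.dotProduct_mulVec_zero_iff x).1 h))
    exact lt_of_le_of_ne h0 (Ne.symm hne)
  have hSinv_pd : (S⁻¹).PosDef := hSpd.inv
  have hSt : Sᵀ = S := by
    rw [← Matrix.conjTranspose_eq_transpose_of_trivial]
    exact hSpsd.1
  have hSinvT : (S⁻¹)ᵀ = S⁻¹ := by rw [Matrix.transpose_nonsing_inv, hSt]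
  have hSig_psd : Sig.PosSemidef := by
    rw [hSigdef, ← hCt, ← Matrix.conjTranspose_eq_transpose_of_trivial]
    exact hSinv_pd.posSemidef.mul_mul_conjTranspose_same C
  have hSigT : Sigᵀ = Sig := by
    rw [← Matrix.conjTranspose_eq_transpose_of_trivial]
    exact hSig_psd.1
  have hpsd' : ∀ x : Fin D → ℝ, 0 ≤ x ⬝ᵥ Sig *ᵥ x := fun x => by simpa using hSig_psd.dotProduct_mulVec_nonneg x
  have hμ0 : ∀ k, 0 ≤ μ k := by
    intro k
    have h := hpsd' (Uᵀ k)
    rw [heig k, dotProduct_smul, smul_eq_mul] at h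
    have h1 : Uᵀ k ⬝ᵥ Uᵀ k = (1 : Matrix (Fin P) (Fin P) ℝ) k k := by
      rw [← horth]; simp [Matrix.mul_apply, dotProduct]
    rw [h1, Matrix.one_apply_eq, mul_one] at h
    exact h
  obtain ⟨T, hTsymm, hTT0⟩ := exists_sqrt_psd hSpsd
  have hTT : T * Tᵀ = S := by rw [hTsymm]; exact hTT0
  set W : Matrix (Fin D) (Fin D) ℝ := C * S⁻¹ with hWdef
  have hWS : W * S = C := by
    rw [hWdef, Matrix.mul_assoc, Matrix.nonsing_inv_mul S hdet, Matrix.mul_one]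
  have hWt : Wᵀ = S⁻¹ * Cᵀ := by rw [hWdef, transpose_mul, hSinvT]
  have hSWt : S * Wᵀ = Ct := by
    rw [hWt, ← Matrix.mul_assoc, Matrix.mul_nonsing_inv S hdet, Matrix.one_mul, hCt]
  have hWSWt : W * S * Wᵀ = Sig := by
    rw [hWS, hWt, ← Matrix.mul_assoc, hCt, ← hSigdef]
  rw [loss_decomp X Y (U * (Uᵀ * C * S⁻¹)) W T S Sig hSdef hTT (hWS.trans hCdef)
      (hSWt.trans hCtdef) hWSWt,
    loss_decomp X Y (A' * B') W T S Sig hSdef hTT (hWS.trans hCdef)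
      (hSWt.trans hCtdef) hWSWt]
  refine add_le_add_left ?_ _
  have hM0 : U * (Uᵀ * C * S⁻¹) = U * Uᵀ * W := by
    rw [hWdef]; simp only [Matrix.mul_assoc]
  rw [hM0, candidate_value U μ W T S Sig horth hTT hWSWt heig]
  obtain ⟨r, V, hr, hVV, hVproj⟩ := exists_proj A'
  have hGG : (W * T) * (W * T)ᵀ = Sig := by
    rw [transpose_mul, ← Matrix.mul_assoc, Matrix.mul_assoc W T Tᵀ, hTT]
    exact hWSWt
  have hPiR : (V * Vᵀ) * (A' * B' * T) = A' * B' * T := by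
    rw [Matrix.mul_assoc A' B' T]
    exact hVproj (B' * T)
  have hlow := proj_lower_s14 (V * Vᵀ) (A' * B' * T) (W * T)
    (by rw [transpose_mul, transpose_transpose])
    (by rw [Matrix.mul_assoc, ← Matrix.mul_assoc Vᵀ V Vᵀ, hVV, Matrix.one_mul]) hPiR
  have hres := resid_value V (W * T) Sig hVV hGG
  have hky := kyFan Sig hSigT U μ hμ0 horth heig hmax hr V hVV
  have hsub : (A' * B' - W) * T = A' * B' * T - W * T := by rw [Matrix.sub_mul]
  rw [hsub]
  calc trace Sig - ∑ k, μ k ≤ trace Sig - trace (Vᵀ * Sig * V) := by linarith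
    _ = frobSq ((1 - V * Vᵀ) * (W * T)) := hres.symm
    _ ≤ frobSq (A' * B' * T - W * T) := hlow
end
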